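/- arXiv:q-alg/9512033 — 2 statements merged into one kernel-verified Lean document; each statement's English description precedes it below -/
import Mathlib

section
/- For every n ≥ 2 and every braid β ∈ B_n, there exists γ ∈ B_n and positive integers n₁, …, n_k with n₁ + ⋯ + n_k = n such that γ⁻¹βγ is a woven braid of type (n₁, …, n_k). In other words, every conjugacy class of the braid group B_n contains at least one woven braid. -/
/-! Basic setup: the braid group `B_n` as a presented group.  Generators are
indexed by `ℕ`; the generator with index `i` represents `σ_i` for
`1 ≤ i ≤ n-1`, and all generators with index `0` or `≥ n` are trivialized. -/

/-- The relators of the braid group `B_n`. -/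
def braidRels (n : ℕ) : Set (FreeGroup ℕ) :=
  { r | (∃ i, 1 ≤ i ∧ i + 2 ≤ n ∧
          r = .of i * .of (i+1) * .of i * (.of (i+1) * .of i * .of (i+1))⁻¹) ∨
        (∃ i j, 1 ≤ i ∧ i + 2 ≤ j ∧ j + 1 ≤ n ∧
          r = .of i * .of j * (.of j * .of i)⁻¹) ∨
        (∃ i, (i = 0 ∨ n ≤ i) ∧ r = .of i) }

/-- The braid group on `n` strings. -/
abbrev BraidGroup (n : ℕ) := PresentedGroup (braidRels n)

/-- The standard generator `σ_i` of `B_n` (nontrivial for `1 ≤ i ≤ n-1`). -/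
def σ (n i : ℕ) : BraidGroup n := PresentedGroup.of i

/-- The transposition `(i, i+1)` of the strings `{1, …, n}`, as a permutation of `ℕ`. -/
def permOfGen (n i : ℕ) : Equiv.Perm ℕ :=
  if 1 ≤ i ∧ i + 1 ≤ n then Equiv.swap i (i+1) else 1

theorem braidRels_lift (n : ℕ) :
    ∀ r ∈ braidRels n, FreeGroup.lift (permOfGen n) r = 1 := by
  rintro r (⟨i, h1, h2, rfl⟩ | ⟨i, j, h1, h2, h3, rfl⟩ | ⟨i, hi, rfl⟩)
  · have e1 : permOfGen n i = Equiv.swap i (i+1) := if_pos ⟨h1, by omega⟩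
    have e2 : permOfGen n (i+1) = Equiv.swap (i+1) (i+2) := if_pos ⟨by omega, by omega⟩
    simp only [map_mul, map_inv, FreeGroup.lift_apply_of, e1, e2]
    rw [mul_inv_eq_one]
    have l : Equiv.swap i (i+1) * Equiv.swap (i+1) (i+2) * Equiv.swap i (i+1)
        = Equiv.swap i (i+2) := by
      have h := Equiv.swap_mul_swap_mul_swap
        (x := i+2) (y := i+1) (z := i) (by omega) (by omega)
      rwa [Equiv.swap_comm (i+1) i, Equiv.swap_comm (i+2) (i+1)] at h
    have r : Equiv.swap (i+1) (i+2) * Equiv.swap i (i+1) * Equiv.swap (i+1) (i+2)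
        = Equiv.swap i (i+2) := by
      have h := Equiv.swap_mul_swap_mul_swap
        (x := i) (y := i+1) (z := i+2) (by omega) (by omega)
      rwa [Equiv.swap_comm (i+2) i] at h
    rw [l, r]
  · have e1 : permOfGen n i = Equiv.swap i (i+1) := if_pos ⟨h1, by omega⟩
    have e2 : permOfGen n j = Equiv.swap j (j+1) := if_pos ⟨by omega, by omega⟩
    simp only [map_mul, map_inv, FreeGroup.lift_apply_of, e1, e2]
    rw [mul_inv_eq_one]
    have hd : (Equiv.swap i (i+1)).Disjoint (Equiv.swap j (j+1)) := by
      intro x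
      rcases eq_or_ne x i with rfl | hxi
      · right; exact Equiv.swap_apply_of_ne_of_ne (by omega) (by omega)
      rcases eq_or_ne x (i+1) with rfl | hxi1
      · right; exact Equiv.swap_apply_of_ne_of_ne (by omega) (by omega)
      · left; exact Equiv.swap_apply_of_ne_of_ne hxi hxi1
    exact hd.commute
  · have h : permOfGen n i = 1 := if_neg (by omega)
    simp [h]

/-- The canonical projection `Π : B_n → S_n`, sending `σ_i` to the
transposition `(i, i+1)` (strings are `1, …, n`, permutations of `ℕ`
fixing everything else). -/
def braidPerm (n : ℕ) : BraidGroup n →* Equiv.Perm ℕ :=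
  PresentedGroup.toGroup (braidRels_lift n)

theorem braidPerm_σ (n i : ℕ) : braidPerm n (σ n i) = permOfGen n i :=
  PresentedGroup.toGroup.of (braidRels_lift n)

/-- The pure braid group `P_n = ker Π`. -/
def PureBraid (n : ℕ) : Subgroup (BraidGroup n) := (braidPerm n).ker

/-- The standard pure braid generator
`A_{ij} = σ_{j-1} ⋯ σ_{i+1} σ_i² σ_{i+1}⁻¹ ⋯ σ_{j-1}⁻¹`. -/
def A (n i : ℕ) : ℕ → BraidGroup n
  | 0 => 1
  | j+1 => if j ≤ i then σ n i ^ 2 else σ n j * A n i j * (σ n j)⁻¹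

/-- The group `P_n^j` of pure `j`-braids, generated by `A_{ij}` for `1 ≤ i < j`. -/
def P (n j : ℕ) : Subgroup (BraidGroup n) :=
  Subgroup.closure ((fun i => A n i j) '' Set.Ico 1 j)

/-- Partial sums `N_1 = n_1, N_2 = n_1+n_2, …, N_k = n_1+⋯+n_k` of a list. -/
def partialSums : List ℕ → List ℕ
  | [] => []
  | a :: l => a :: (partialSums l).map (a + ·)

/-- The permutation braid `π_{n₁…n_k}`: the product `σ_1 σ_2 ⋯ σ_{n-1}` with the
letters `σ_{N_1}, …, σ_{N_{k-1}}` omitted. -/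
def piBraid (n : ℕ) (ns : List ℕ) : BraidGroup n :=
  (((List.range n).filter fun i => decide (1 ≤ i ∧ i ∉ partialSums ns)).map (σ n)).prod

/-- The permutation braid `π_n = σ_1 σ_2 ⋯ σ_{n-1}`. -/
def piN (n : ℕ) : BraidGroup n := piBraid n [n]

/-- A braid is woven of type `(n₁, …, n_k)` if it can be written as
`π_{n₁…n_k} β_{N_1} β_{N_2} ⋯ β_{N_k}` with each `β_{N_i} ∈ P_n^{N_i}`. -/
def IsWovenOfType (n : ℕ) (ns : List ℕ) (w : BraidGroup n) : Prop :=
  ∃ b : ℕ → BraidGroup n,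
    (∀ m ∈ partialSums ns, b m ∈ P n m) ∧
    w = piBraid n ns * ((partialSums ns).map b).prod

/-- `W_n^1 = π_n P_n^n`, the set of woven braids of type `(n)`. -/
def W1 (n : ℕ) : Set (BraidGroup n) := { w | ∃ b ∈ P n n, w = piN n * b }
namespace Braid
variable {n : ℕ}

theorem rel_eq_one {r : FreeGroup ℕ} (h : r ∈ braidRels n) :
    (QuotientGroup.mk r : BraidGroup n) = 1 := by
  rw [QuotientGroup.eq_one_iff]
  exact Subgroup.subset_normalClosure h

theorem mk_of (i : ℕ) : (QuotientGroup.mk (FreeGroup.of i) : BraidGroup n) = σ n i := rfl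

theorem sigma_zero : σ n 0 = 1 := by
  have := rel_eq_one (n := n) (r := FreeGroup.of 0) (Or.inr (Or.inr ⟨0, Or.inl rfl, rfl⟩))
  exact this

theorem sigma_ge (i : ℕ) (h : n ≤ i) : σ n i = 1 := by
  have := rel_eq_one (n := n) (r := FreeGroup.of i) (Or.inr (Or.inr ⟨i, Or.inr h, rfl⟩))
  exact this

theorem braid_rel {i : ℕ} (h1 : 1 ≤ i) (h2 : i + 2 ≤ n) :
    σ n i * σ n (i+1) * σ n i = σ n (i+1) * σ n i * σ n (i+1) := by
  have := rel_eq_one (n := n) (Or.inl ⟨i, h1, h2, rfl⟩)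
  simp only [QuotientGroup.mk_mul, QuotientGroup.mk_inv, mul_inv_eq_one, mk_of] at this
  exact this

theorem comm_rel {i j : ℕ} (h : i + 2 ≤ j) : Commute (σ n i) (σ n j) := by
  rcases Nat.eq_zero_or_pos i with rfl | hi
  · rw [sigma_zero]; exact Commute.one_left _
  rcases le_or_gt (j+1) n with hj | hj
  · have := rel_eq_one (n := n) (Or.inr (Or.inl ⟨i, j, hi, h, hj, rfl⟩))
    simp only [QuotientGroup.mk_mul, QuotientGroup.mk_inv, mul_inv_eq_one, mk_of] at this
    exact this
  · rw [sigma_ge j (by omega)]; exact Commute.one_right _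

theorem comm_rel' {i j : ℕ} (h : j + 2 ≤ i) : Commute (σ n i) (σ n j) :=
  (comm_rel h).symm

/-- the word `σ_{m-1} σ_{m-2} ⋯ σ_i`. -/
def rword (n i m : ℕ) : BraidGroup n := (((List.range' i (m - i)).map (σ n)).reverse).prod

theorem rword_self (i : ℕ) : rword n i i = 1 := by simp [rword]

theorem rword_of_le {i m : ℕ} (h : m ≤ i) : rword n i m = 1 := by
  simp [rword, Nat.sub_eq_zero_of_le h]

theorem rword_top {i m : ℕ} (h : i ≤ m) : rword n i (m+1) = σ n m * rword n i m := by
  have : m + 1 - i = (m - i) + 1 := by omega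
  rw [rword, this, List.range'_1_concat, List.map_append, List.reverse_append]
  simp [rword]
  congr 1
  omega

theorem rword_pop {i m : ℕ} (h : i < m) : rword n i m = rword n (i+1) m * σ n i := by
  have : m - i = (m - (i+1)) + 1 := by omega
  rw [rword, this]
  rw [show List.range' i (m - (i + 1) + 1) = i :: List.range' (i+1) (m - (i+1)) by
    rw [List.range'_succ]]
  simp [rword]

theorem commute_rword_of_ge {k i m : ℕ} (h : m + 1 ≤ k) : Commute (σ n k) (rword n i m) := by
  apply Commute.list_prod_right
  intro y hy
  simp only [List.mem_reverse, List.mem_map, List.mem_range'_1] at hy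
  obtain ⟨t, ht, rfl⟩ := hy
  exact comm_rel' (by omega)

theorem commute_rword_of_le {k i m : ℕ} (h : k + 2 ≤ i) : Commute (σ n k) (rword n i m) := by
  apply Commute.list_prod_right
  intro y hy
  simp only [List.mem_reverse, List.mem_map, List.mem_range'_1] at hy
  obtain ⟨t, ht, rfl⟩ := hy
  exact comm_rel (by omega)

/-- pushing a generator through `rword` from the right. -/
theorem rword_push {i k m : ℕ} (hi : 1 ≤ i) (hik : i + 1 ≤ k) (hkm : k + 1 ≤ m) (hmn : m ≤ n) :
    rword n i m * σ n k = σ n (k-1) * rword n i m := by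
  induction m, hkm using Nat.le_induction with
  | base =>
      have hcomm : Commute (σ n k) (rword n i (k-1)) := commute_rword_of_ge (by omega)
      have e1 : rword n i k = σ n (k-1) * rword n i (k-1) := by
        have := rword_top (n := n) (i := i) (m := k-1) (by omega)
        rwa [show k - 1 + 1 = k by omega] at this
      have hb : σ n (k-1) * σ n k * σ n (k-1) = σ n k * σ n (k-1) * σ n k := by
        have := braid_rel (n := n) (i := k-1) (by omega) (by omega)
        rwa [show k - 1 + 1 = k by omega] at this
      rw [rword_top (by omega), e1]
      calc σ n k * (σ n (k-1) * rword n i (k-1)) * σ n k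
          = σ n k * σ n (k-1) * (rword n i (k-1) * σ n k) := by group
        _ = σ n k * σ n (k-1) * (σ n k * rword n i (k-1)) := by rw [← hcomm.eq]
        _ = (σ n k * σ n (k-1) * σ n k) * rword n i (k-1) := by group
        _ = (σ n (k-1) * σ n k * σ n (k-1)) * rword n i (k-1) := by rw [hb]
        _ = σ n (k-1) * (σ n k * (σ n (k-1) * rword n i (k-1))) := by group
  | succ m hm ih =>
      rw [rword_top (by omega), mul_assoc, ih (by omega)]
      have : Commute (σ n m) (σ n (k-1)) := comm_rel' (by omega)
      rw [← mul_assoc, this.eq, mul_assoc]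


end Braid

section GroupAux
variable {G : Type*} [Group G] {a b : G}

theorem bv1 (h : a*b*a = b*a*b) : a*b*a⁻¹ = b⁻¹*(a*b) := by
  apply mul_left_cancel (a := b)
  have h1 : b*(a*b*a⁻¹) = (b*a*b)*a⁻¹ := by group
  rw [h1, ← h]
  group

theorem bsq (h : a*b*a = b*a*b) : a*(b*b)*a⁻¹ = b⁻¹*(a*a)*b := by
  have v := bv1 h
  have e : a*(b*b)*a⁻¹ = (a*b*a⁻¹)*(a*b*a⁻¹) := by group
  rw [e, v]
  group

end GroupAux

namespace Braid2
open Braid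
variable {n : ℕ}

theorem A_succ {i j : ℕ} (h : i < j) : A n i (j+1) = σ n j * A n i j * (σ n j)⁻¹ := by
  rw [A, if_neg (by omega)]

theorem A_base (i : ℕ) : A n i (i+1) = σ n i ^ 2 := by
  rw [A, if_pos (le_refl i)]

theorem A_expand {i m : ℕ} (h : i < m) :
    A n i m = rword n (i+1) m * σ n i ^ 2 * (rword n (i+1) m)⁻¹ := by
  induction m with
  | zero => omega
  | succ m ih =>
    rcases Nat.lt_or_ge i m with h' | h'
    · rw [A_succ h', ih h', rword_top (by omega)]
      group
    · have : i = m := by omega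
      subst this
      rw [A_base, rword_self]
      group

theorem rword_mul_sigma {i m : ℕ} (h : i < m) :
    rword n i m * σ n i = A n i m * rword n (i+1) m := by
  rw [A_expand h, rword_pop h, sq]
  group

/-- `σ_k` commutes with `A_{i,m}` when `k + 2 ≤ i`. -/
theorem sigma_A_comm_low {k i m : ℕ} (hk : k + 2 ≤ i) (h : i < m) :
    Commute (σ n k) (A n i m) := by
  rw [A_expand h]
  have c1 : Commute (σ n k) (rword n (i+1) m) := commute_rword_of_le (by omega)
  have c2 : Commute (σ n k) (σ n i ^ 2) := (comm_rel hk).pow_right 2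
  exact (c1.mul_right c2).mul_right c1.inv_right

/-- `σ_k` commutes with `A_{i,m}` when `i + 1 ≤ k ≤ m - 2`. -/
theorem sigma_A_comm_high {k i m : ℕ} (hi : 1 ≤ i) (hik : i + 1 ≤ k) (hk : k + 2 ≤ m)
    (hmn : m ≤ n) : Commute (σ n k) (A n i m) := by
  have h : i < m := by omega
  have hp := rword_push (n := n) (i := i+1) (k := k+1) (by omega) (by omega) (by omega) hmn
  rw [show k + 1 - 1 = k from rfl] at hp
  have c2 : Commute (σ n (k+1)) (σ n i ^ 2) := (comm_rel' (by omega)).pow_right 2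
  rw [A_expand h]
  show _ * _ = _ * _
  calc σ n k * (rword n (i+1) m * σ n i ^ 2 * (rword n (i+1) m)⁻¹)
      = (σ n k * rword n (i+1) m) * σ n i ^ 2 * (rword n (i+1) m)⁻¹ := by group
    _ = (rword n (i+1) m * σ n (k+1)) * σ n i ^ 2 * (rword n (i+1) m)⁻¹ := by rw [← hp]
    _ = rword n (i+1) m * (σ n (k+1) * σ n i ^ 2) * (rword n (i+1) m)⁻¹ := by group
    _ = rword n (i+1) m * (σ n i ^ 2 * σ n (k+1)) * (rword n (i+1) m)⁻¹ := by rw [c2.eq]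
    _ = rword n (i+1) m * σ n i ^ 2 * ((rword n (i+1) m)⁻¹ * (rword n (i+1) m * σ n (k+1)) * (rword n (i+1) m)⁻¹) := by group
    _ = rword n (i+1) m * σ n i ^ 2 * ((rword n (i+1) m)⁻¹ * (σ n k * rword n (i+1) m) * (rword n (i+1) m)⁻¹) := by rw [hp]
    _ = rword n (i+1) m * σ n i ^ 2 * (rword n (i+1) m)⁻¹ * σ n k := by group

/-- `σ_i A_{i,m} σ_i⁻¹ = A_{i+1,m}`. -/
theorem sigma_A_conj_eq {i m : ℕ} (hi : 1 ≤ i) (him : i + 2 ≤ m) (hmn : m ≤ n) :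
    σ n i * A n i m * (σ n i)⁻¹ = A n (i+1) m := by
  have hb : σ n i * σ n (i+1) * σ n i = σ n (i+1) * σ n i * σ n (i+1) :=
    braid_rel hi (by omega)
  have hbs : σ n (i+1) * (σ n i * σ n i) * (σ n (i+1))⁻¹ = (σ n i)⁻¹ * (σ n (i+1) * σ n (i+1)) * σ n i :=
    bsq hb.symm
  have c1 : Commute (σ n i) (rword n (i+2) m) := commute_rword_of_le (by omega)
  rw [A_expand (show i < m by omega), A_expand (show i + 1 < m by omega),
    rword_pop (show i + 1 < m by omega)]
  have e1 : σ n i ^ 2 = σ n i * σ n i := sq (σ n i)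
  have e2 : σ n (i+1) ^ 2 = σ n (i+1) * σ n (i+1) := sq (σ n (i+1))
  rw [e1, e2]
  calc σ n i * (rword n (i+2) m * σ n (i+1) * (σ n i * σ n i) * (rword n (i+2) m * σ n (i+1))⁻¹) * (σ n i)⁻¹
      = (σ n i * rword n (i+2) m) * (σ n (i+1) * (σ n i * σ n i) * (σ n (i+1))⁻¹) * (rword n (i+2) m)⁻¹ * (σ n i)⁻¹ := by group
    _ = (rword n (i+2) m * σ n i) * ((σ n i)⁻¹ * (σ n (i+1) * σ n (i+1)) * σ n i) * (rword n (i+2) m)⁻¹ * (σ n i)⁻¹ := by rw [c1.eq, hbs]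
    _ = rword n (i+2) m * (σ n (i+1) * σ n (i+1)) * (σ n i * (rword n (i+2) m)⁻¹ * (σ n i)⁻¹) := by group
    _ = rword n (i+2) m * (σ n (i+1) * σ n (i+1)) * ((rword n (i+2) m)⁻¹ * σ n i * (σ n i)⁻¹) := by rw [show σ n i * (rword n (i+2) m)⁻¹ = (rword n (i+2) m)⁻¹ * σ n i from c1.inv_right.eq]
    _ = rword n (i+2) m * (σ n (i+1) * σ n (i+1)) * (rword n (i+2) m)⁻¹ := by group

/-- `σ_{i} A_{i+1,m} σ_{i}⁻¹ = A_{i+1,m}⁻¹ A_{i,m} A_{i+1,m}`. -/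
theorem sigma_A_conj_up {i m : ℕ} (hi : 1 ≤ i) (him : i + 2 ≤ m) (hmn : m ≤ n) :
    σ n i * A n (i+1) m * (σ n i)⁻¹ = (A n (i+1) m)⁻¹ * A n i m * A n (i+1) m := by
  have hb : σ n i * σ n (i+1) * σ n i = σ n (i+1) * σ n i * σ n (i+1) :=
    braid_rel hi (by omega)
  have hbs : σ n i * (σ n (i+1) * σ n (i+1)) * (σ n i)⁻¹
      = (σ n (i+1))⁻¹ * (σ n i * σ n i) * σ n (i+1) := bsq hb
  have c1 : Commute (σ n i) (rword n (i+2) m) := commute_rword_of_le (by omega)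
  have eA : A n i m = rword n (i+2) m * (σ n (i+1) * (σ n i * σ n i) * (σ n (i+1))⁻¹) * (rword n (i+2) m)⁻¹ := by
    rw [A_expand (show i < m by omega), rword_pop (show i + 1 < m by omega), sq]
    group
  have eA1 : A n (i+1) m = rword n (i+2) m * (σ n (i+1) * σ n (i+1)) * (rword n (i+2) m)⁻¹ := by
    rw [A_expand (show i + 1 < m by omega), sq]
  rw [eA, eA1]
  calc σ n i * (rword n (i+2) m * (σ n (i+1) * σ n (i+1)) * (rword n (i+2) m)⁻¹) * (σ n i)⁻¹
      = (σ n i * rword n (i+2) m) * (σ n (i+1) * σ n (i+1)) * ((rword n (i+2) m)⁻¹ * (σ n i)⁻¹) := by group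
    _ = (rword n (i+2) m * σ n i) * (σ n (i+1) * σ n (i+1)) * ((σ n i)⁻¹ * (rword n (i+2) m)⁻¹) := by
          rw [c1.eq, show (rword n (i+2) m)⁻¹ * (σ n i)⁻¹ = (σ n i)⁻¹ * (rword n (i+2) m)⁻¹ from
            (c1.inv_left.inv_right.eq).symm]
    _ = rword n (i+2) m * (σ n i * (σ n (i+1) * σ n (i+1)) * (σ n i)⁻¹) * (rword n (i+2) m)⁻¹ := by group
    _ = rword n (i+2) m * ((σ n (i+1))⁻¹ * (σ n i * σ n i) * σ n (i+1)) * (rword n (i+2) m)⁻¹ := by rw [hbs]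
    _ = (rword n (i+2) m * (σ n (i+1) * σ n (i+1)) * (rword n (i+2) m)⁻¹)⁻¹ *
        (rword n (i+2) m * (σ n (i+1) * (σ n i * σ n i) * (σ n (i+1))⁻¹) * (rword n (i+2) m)⁻¹) *
        (rword n (i+2) m * (σ n (i+1) * σ n (i+1)) * (rword n (i+2) m)⁻¹) := by group

theorem sigma_A_conj_down {i m : ℕ} (hi : 2 ≤ i) (him : i + 1 ≤ m) (hmn : m ≤ n) :
    σ n (i-1) * A n i m * (σ n (i-1))⁻¹ = (A n i m)⁻¹ * A n (i-1) m * A n i m := by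
  have hb : σ n (i-1) * σ n i * σ n (i-1) = σ n i * σ n (i-1) * σ n i := by
    have := braid_rel (n := n) (i := i-1) (by omega) (by omega)
    rwa [show i - 1 + 1 = i by omega] at this
  have hbs : σ n (i-1) * (σ n i * σ n i) * (σ n (i-1))⁻¹
      = (σ n i)⁻¹ * (σ n (i-1) * σ n (i-1)) * σ n i := bsq hb
  have c1 : Commute (σ n (i-1)) (rword n (i+1) m) := commute_rword_of_le (by omega)
  have eA : A n i m = rword n (i+1) m * (σ n i * σ n i) * (rword n (i+1) m)⁻¹ := by
    rw [A_expand (show i < m by omega), sq]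
  have eA1 : A n (i-1) m = rword n (i+1) m * (σ n i * (σ n (i-1) * σ n (i-1)) * (σ n i)⁻¹) * (rword n (i+1) m)⁻¹ := by
    have := A_expand (n := n) (i := i-1) (m := m) (by omega)
    rw [show i - 1 + 1 = i by omega] at this
    rw [this, rword_pop (show i < m by omega), sq]
    group
  rw [eA, eA1]
  calc σ n (i-1) * (rword n (i+1) m * (σ n i * σ n i) * (rword n (i+1) m)⁻¹) * (σ n (i-1))⁻¹
      = (σ n (i-1) * rword n (i+1) m) * (σ n i * σ n i) * ((rword n (i+1) m)⁻¹ * (σ n (i-1))⁻¹) := by group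
    _ = (rword n (i+1) m * σ n (i-1)) * (σ n i * σ n i) * ((σ n (i-1))⁻¹ * (rword n (i+1) m)⁻¹) := by
          rw [c1.eq, show (rword n (i+1) m)⁻¹ * (σ n (i-1))⁻¹ = (σ n (i-1))⁻¹ * (rword n (i+1) m)⁻¹ from
            (c1.inv_left.inv_right.eq).symm]
    _ = rword n (i+1) m * (σ n (i-1) * (σ n i * σ n i) * (σ n (i-1))⁻¹) * (rword n (i+1) m)⁻¹ := by group
    _ = rword n (i+1) m * ((σ n i)⁻¹ * (σ n (i-1) * σ n (i-1)) * σ n i) * (rword n (i+1) m)⁻¹ := by rw [hbs]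
    _ = (rword n (i+1) m * (σ n i * σ n i) * (rword n (i+1) m)⁻¹)⁻¹ *
        (rword n (i+1) m * (σ n i * (σ n (i-1) * σ n (i-1)) * (σ n i)⁻¹) * (rword n (i+1) m)⁻¹) *
        (rword n (i+1) m * (σ n i * σ n i) * (rword n (i+1) m)⁻¹) := by group

theorem sigma_inv_A_conj {i m : ℕ} (hi : 1 ≤ i) (him : i + 2 ≤ m) (hmn : m ≤ n) :
    (σ n i)⁻¹ * A n (i+1) m * σ n i = A n i m := by
  rw [← sigma_A_conj_eq hi him hmn]
  group

theorem sigma_inv_A_conj_self {i m : ℕ} (hi : 1 ≤ i) (him : i + 2 ≤ m) (hmn : m ≤ n) :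
    (σ n i)⁻¹ * A n i m * σ n i = A n i m * A n (i+1) m * (A n i m)⁻¹ := by
  have hA : σ n i * A n (i+1) m * (σ n i)⁻¹ = (A n (i+1) m)⁻¹ * A n i m * A n (i+1) m := by
    have := sigma_A_conj_down (n := n) (i := i+1) (m := m) (by omega) (by omega) hmn
    rwa [show i + 1 - 1 = i from rfl] at this
  have e : (σ n i)⁻¹ * A n (i+1) m * σ n i = A n i m := sigma_inv_A_conj hi him hmn
  have hX : A n i m = A n (i+1) m * (σ n i * A n (i+1) m * (σ n i)⁻¹) * (A n (i+1) m)⁻¹ := by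
    rw [hA]; group
  calc (σ n i)⁻¹ * A n i m * σ n i
      = ((σ n i)⁻¹ * A n (i+1) m * σ n i) * A n (i+1) m * ((σ n i)⁻¹ * (A n (i+1) m)⁻¹ * σ n i) := by
        rw [hX]; group
    _ = A n i m * A n (i+1) m * ((σ n i)⁻¹ * (A n (i+1) m)⁻¹ * σ n i) := by rw [e]
    _ = A n i m * A n (i+1) m * (A n i m)⁻¹ := by
        rw [show (σ n i)⁻¹ * (A n (i+1) m)⁻¹ * σ n i = (A n i m)⁻¹ from by rw [← e]; group]

theorem sigma_inv_A_conj_down {i m : ℕ} (hi : 2 ≤ i) (him : i + 1 ≤ m) (hmn : m ≤ n) :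
    (σ n (i-1))⁻¹ * A n i m * σ n (i-1) = A n (i-1) m := by
  have := sigma_A_conj_eq (n := n) (i := i-1) (m := m) (by omega) (by omega) hmn
  rw [show i - 1 + 1 = i by omega] at this
  rw [← this]
  group

theorem A_mem_P {i m : ℕ} (h1 : 1 ≤ i) (h2 : i < m) : A n i m ∈ P n m :=
  Subgroup.subset_closure ⟨i, ⟨h1, h2⟩, rfl⟩

theorem sigma_conj_A_mem {k i m : ℕ} (hk1 : 1 ≤ k) (hk2 : k + 2 ≤ m) (hi1 : 1 ≤ i)
    (hi2 : i < m) (hmn : m ≤ n) : σ n k * A n i m * (σ n k)⁻¹ ∈ P n m := by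
  rcases Nat.lt_or_ge (k+2) i with h | h
  · rw [show σ n k * A n i m * (σ n k)⁻¹ = A n i m from by
      rw [(sigma_A_comm_low (by omega) hi2).eq]; group]
    exact A_mem_P hi1 hi2
  rcases Nat.eq_or_lt_of_le h with h' | h'
  · -- k + 2 = i
    rw [show σ n k * A n i m * (σ n k)⁻¹ = A n i m from by
      rw [(sigma_A_comm_low (by omega) hi2).eq]; group]
    exact A_mem_P hi1 hi2
  rcases Nat.lt_or_ge k i with hki | hki
  · -- k = i - 1
    have hk : k = i - 1 := by omega
    subst hk
    rw [sigma_A_conj_down (by omega) (by omega) hmn]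
    exact mul_mem (mul_mem (inv_mem (A_mem_P hi1 hi2)) (A_mem_P (by omega) (by omega))) (A_mem_P hi1 hi2)
  rcases Nat.eq_or_lt_of_le hki with hk | hk
  · subst hk
    rw [sigma_A_conj_eq hi1 hk2 hmn]
    exact A_mem_P (by omega) (by omega)
  · rw [show σ n k * A n i m * (σ n k)⁻¹ = A n i m from by
      rw [(sigma_A_comm_high hi1 (by omega) hk2 hmn).eq]; group]
    exact A_mem_P hi1 hi2

theorem sigma_inv_conj_A_mem {k i m : ℕ} (hk1 : 1 ≤ k) (hk2 : k + 2 ≤ m) (hi1 : 1 ≤ i)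
    (hi2 : i < m) (hmn : m ≤ n) : (σ n k)⁻¹ * A n i m * σ n k ∈ P n m := by
  rcases Nat.lt_or_ge k i with hki | hki
  · rcases Nat.eq_or_lt_of_le hki with hk | hk
    · -- k + 1 = i
      have : i - 1 = k := by omega
      have h := sigma_inv_A_conj_down (n := n) (i := i) (m := m) (by omega) (by omega) hmn
      rw [this] at h
      rw [h]
      exact A_mem_P (by omega) (by omega)
    · -- k + 2 ≤ i
      rw [show (σ n k)⁻¹ * A n i m * σ n k = A n i m from by
        rw [show (σ n k)⁻¹ * A n i m = A n i m * (σ n k)⁻¹ from (sigma_A_comm_low (by omega) hi2).inv_left.eq]; group]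
      exact A_mem_P hi1 hi2
  rcases Nat.eq_or_lt_of_le hki with hk | hk
  · subst hk
    rw [sigma_inv_A_conj_self hi1 hk2 hmn]
    exact mul_mem (mul_mem (A_mem_P hi1 hi2) (A_mem_P (by omega) (by omega))) (inv_mem (A_mem_P hi1 hi2))
  · rw [show (σ n k)⁻¹ * A n i m * σ n k = A n i m from by
      rw [show (σ n k)⁻¹ * A n i m = A n i m * (σ n k)⁻¹ from
        (sigma_A_comm_high hi1 (by omega) hk2 hmn).inv_left.eq]; group]
    exact A_mem_P hi1 hi2

/-- The subgroup generated by `σ_1, …, σ_{m-1}`. -/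
def Gs (n m : ℕ) : Subgroup (BraidGroup n) := Subgroup.closure (σ n '' Set.Ico 1 m)

theorem sigma_mem_Gs {k m : ℕ} (h1 : 1 ≤ k) (h2 : k < m) : σ n k ∈ Gs n m :=
  Subgroup.subset_closure ⟨k, ⟨h1, h2⟩, rfl⟩

theorem Gs_mono {m m' : ℕ} (h : m ≤ m') : Gs n m ≤ Gs n m' :=
  Subgroup.closure_mono (Set.image_mono (Set.Ico_subset_Ico_right h))

theorem rword_mem_Gs {i m : ℕ} (h1 : 1 ≤ i) : rword n i m ∈ Gs n m := by
  apply Subgroup.list_prod_mem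
  intro x hx
  simp only [List.mem_reverse, List.mem_map, List.mem_range'_1] at hx
  obtain ⟨t, ht, rfl⟩ := hx
  exact sigma_mem_Gs (by omega) (by omega)

theorem A_mem_Gs {i m : ℕ} (h1 : 1 ≤ i) (h2 : i < m) : A n i m ∈ Gs n m := by
  rw [A_expand h2]
  exact mul_mem (mul_mem (rword_mem_Gs (by omega))
    (pow_mem (sigma_mem_Gs h1 h2) 2)) (inv_mem (rword_mem_Gs (by omega)))

theorem P_le_Gs (m : ℕ) : P n m ≤ Gs n m := by
  rw [P, Subgroup.closure_le]
  rintro x ⟨i, ⟨h1, h2⟩, rfl⟩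
  exact A_mem_Gs h1 h2

theorem sigma_conj_P_subset {k m : ℕ} (hk1 : 1 ≤ k) (hk2 : k + 2 ≤ m) (hmn : m ≤ n) :
    ∀ p ∈ P n m, σ n k * p * (σ n k)⁻¹ ∈ P n m := by
  intro p hp
  induction hp using Subgroup.closure_induction with
  | mem x hx =>
      obtain ⟨i, ⟨h1, h2⟩, rfl⟩ := hx
      exact sigma_conj_A_mem hk1 hk2 h1 h2 hmn
  | one => simpa using one_mem (P n m)
  | mul x y hx hy ihx ihy =>
      have : σ n k * (x * y) * (σ n k)⁻¹ = (σ n k * x * (σ n k)⁻¹) * (σ n k * y * (σ n k)⁻¹) := by group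
      rw [this]; exact mul_mem ihx ihy
  | inv x hx ihx =>
      have : σ n k * x⁻¹ * (σ n k)⁻¹ = (σ n k * x * (σ n k)⁻¹)⁻¹ := by group
      rw [this]; exact inv_mem ihx

theorem sigma_inv_conj_P_subset {k m : ℕ} (hk1 : 1 ≤ k) (hk2 : k + 2 ≤ m) (hmn : m ≤ n) :
    ∀ p ∈ P n m, (σ n k)⁻¹ * p * σ n k ∈ P n m := by
  intro p hp
  induction hp using Subgroup.closure_induction with
  | mem x hx =>
      obtain ⟨i, ⟨h1, h2⟩, rfl⟩ := hx
      exact sigma_inv_conj_A_mem hk1 hk2 h1 h2 hmn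
  | one => simpa using one_mem (P n m)
  | mul x y hx hy ihx ihy =>
      have : (σ n k)⁻¹ * (x * y) * σ n k = ((σ n k)⁻¹ * x * σ n k) * ((σ n k)⁻¹ * y * σ n k) := by group
      rw [this]; exact mul_mem ihx ihy
  | inv x hx ihx =>
      have : (σ n k)⁻¹ * x⁻¹ * σ n k = ((σ n k)⁻¹ * x * σ n k)⁻¹ := by group
      rw [this]; exact inv_mem ihx

theorem Gs_le_normalizer {m : ℕ} (hmn : m ≤ n) : Gs n (m-1) ≤ Subgroup.normalizer (P n m : Set (BraidGroup n)) := by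
  rw [Gs, Subgroup.closure_le]
  rintro x ⟨k, ⟨h1, h2⟩, rfl⟩
  rw [SetLike.mem_coe, Subgroup.mem_normalizer_iff]
  intro h
  constructor
  · intro hh; exact sigma_conj_P_subset h1 (by omega) hmn h hh
  · intro hh
    have := sigma_inv_conj_P_subset h1 (by omega) hmn _ hh
    rwa [show (σ n k)⁻¹ * (σ n k * h * (σ n k)⁻¹) * σ n k = h by group] at this

/-- G_{m-1} normalizes P^m. -/
theorem conj_mem_P {g p : BraidGroup n} {l m : ℕ} (hmn : m ≤ n) (hl : l ≤ m - 1)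
    (hg : g ∈ Gs n l) (hp : p ∈ P n m) : g * p * g⁻¹ ∈ P n m := by
  have := Gs_le_normalizer hmn (Gs_mono hl hg)
  rw [Subgroup.mem_normalizer_iff] at this
  exact (this p).mp hp

theorem conj_mem_P' {g p : BraidGroup n} {l m : ℕ} (hmn : m ≤ n) (hl : l ≤ m - 1)
    (hg : g ∈ Gs n l) (hp : p ∈ P n m) : g⁻¹ * p * g ∈ P n m := by
  have hg' : g⁻¹ ∈ Gs n l := inv_mem hg
  have := conj_mem_P hmn hl hg' hp
  rwa [inv_inv] at this

theorem perm_sigma_sq (i : ℕ) : braidPerm n (σ n i ^ 2) = 1 := by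
  rw [map_pow, braidPerm_σ, permOfGen]
  split
  · rw [sq, Equiv.swap_mul_self]
  · rw [one_pow]

theorem perm_A (i m : ℕ) : braidPerm n (A n i m) = 1 := by
  induction m with
  | zero => simp [A]
  | succ m ih =>
    rw [A]
    split
    · exact perm_sigma_sq i
    · rw [map_mul, map_mul, map_inv, ih, mul_one, mul_inv_cancel]

theorem P_le_ker (m : ℕ) : P n m ≤ (braidPerm n).ker := by
  rw [P, Subgroup.closure_le]
  rintro x ⟨i, ⟨h1, h2⟩, rfl⟩
  simp only [SetLike.mem_coe, MonoidHom.mem_ker]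
  exact perm_A i m

theorem perm_Gs_fixes {x : BraidGroup n} {m : ℕ} (hx : x ∈ Gs n m) :
    ∀ z, (z = 0 ∨ m + 1 ≤ z) → braidPerm n x z = z := by
  induction hx using Subgroup.closure_induction with
  | mem y hy =>
      obtain ⟨k, ⟨h1, h2⟩, rfl⟩ := hy
      intro z hz
      rw [braidPerm_σ, permOfGen]
      split
      · exact Equiv.swap_apply_of_ne_of_ne (by omega) (by omega)
      · rfl
  | one => intro z _; simp
  | mul a b _ _ iha ihb =>
      intro z hz
      rw [map_mul, Equiv.Perm.mul_apply, ihb z hz, iha z hz]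
  | inv a _ iha =>
      intro z hz
      rw [map_inv]
      have : braidPerm n a z = z := iha z hz
      exact Equiv.Perm.eq_inv_iff_eq.mp this.symm

theorem perm_rword_apply {i m : ℕ} (h1 : 1 ≤ i) (h2 : i ≤ m) (h3 : m ≤ n) :
    braidPerm n (rword n i m) i = m := by
  induction m, h2 using Nat.le_induction with
  | base => rw [rword_self]; simp
  | succ m hm ih =>
      rw [rword_top hm, map_mul, Equiv.Perm.mul_apply, ih (by omega), braidPerm_σ, permOfGen,
        if_pos ⟨by omega, by omega⟩, Equiv.swap_apply_left]

/-- The set `G_{m-1} · P^m · {r_i}` of coset representatives. -/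
def Cos (n m : ℕ) : Set (BraidGroup n) :=
  {β | ∃ g ∈ Gs n (m-1), ∃ p ∈ P n m, ∃ i, 1 ≤ i ∧ i ≤ m ∧ β = g * p * rword n i m}

theorem one_mem_Cos {m : ℕ} (hm : 1 ≤ m) : (1 : BraidGroup n) ∈ Cos n m :=
  ⟨1, one_mem _, 1, one_mem _, m, hm, le_refl m, by rw [rword_self]; group⟩

theorem Cos_mul_sigma {m k : ℕ} (hmn : m ≤ n) (hk1 : 1 ≤ k) (hk2 : k < m) {u : BraidGroup n}
    (hu : u ∈ Cos n m) : u * σ n k ∈ Cos n m := by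
  obtain ⟨g, hg, p, hp, i, hi1, hi2, rfl⟩ := hu
  rcases Nat.lt_or_ge (k+1) i with hA | hB
  · -- k + 2 ≤ i : commute
    have hc : σ n k * rword n i m = rword n i m * σ n k := (commute_rword_of_le (by omega)).eq
    exact ⟨g * σ n k, mul_mem hg (sigma_mem_Gs hk1 (by omega)),
      (σ n k)⁻¹ * p * σ n k, conj_mem_P' hmn (le_refl _) (sigma_mem_Gs hk1 (by omega)) hp,
      i, hi1, hi2, by rw [mul_assoc (g*p), ← hc]; group⟩
  rcases Nat.eq_or_lt_of_le hB with hB1 | hB2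
  · -- i = k + 1
    exact ⟨g, hg, p, hp, k, hk1, by omega,
      by rw [mul_assoc (g*p), hB1, ← rword_pop (show k < m by omega)]⟩
  · -- i ≤ k
    rcases Nat.eq_or_lt_of_le (show i ≤ k by omega) with hC | hD
    · -- i = k
      subst hC
      exact ⟨g, hg, p * A n i m, mul_mem hp (A_mem_P hi1 (by omega)),
        i+1, by omega, by omega,
        by rw [mul_assoc (g*p), rword_mul_sigma (show i < m by omega)]; group⟩
    · -- i + 1 ≤ k
      have hp2 : rword n i m * σ n k = σ n (k-1) * rword n i m :=
        rword_push hi1 (by omega) (by omega) hmn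
      exact ⟨g * σ n (k-1), mul_mem hg (sigma_mem_Gs (by omega) (by omega)),
        (σ n (k-1))⁻¹ * p * σ n (k-1),
        conj_mem_P' hmn (le_refl _) (sigma_mem_Gs (by omega) (by omega)) hp,
        i, hi1, hi2, by rw [mul_assoc (g*p), hp2]; group⟩

theorem Cos_mul_sigma_inv {m k : ℕ} (hmn : m ≤ n) (hk1 : 1 ≤ k) (hk2 : k < m) {u : BraidGroup n}
    (hu : u ∈ Cos n m) : u * (σ n k)⁻¹ ∈ Cos n m := by
  obtain ⟨g, hg, p, hp, i, hi1, hi2, rfl⟩ := hu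
  rcases Nat.lt_or_ge (k+1) i with hA | hB
  · have hc : σ n k * rword n i m = rword n i m * σ n k := (commute_rword_of_le (by omega)).eq
    refine ⟨g * (σ n k)⁻¹, mul_mem hg (inv_mem (sigma_mem_Gs hk1 (by omega))),
      σ n k * p * (σ n k)⁻¹, conj_mem_P hmn (le_refl _) (sigma_mem_Gs hk1 (by omega)) hp,
      i, hi1, hi2, ?_⟩
    have hc' : (σ n k)⁻¹ * rword n i m = rword n i m * (σ n k)⁻¹ :=
      (commute_rword_of_le (n := n) (i := i) (m := m) (by omega)).inv_left.eq
    rw [mul_assoc (g*p), ← hc']; group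
  rcases Nat.eq_or_lt_of_le hB with hB1 | hB2
  · -- i = k + 1 : r_i σ_k⁻¹ = A_{k,m}⁻¹ r_k
    subst hB1
    have key : rword n (k+1) m * (σ n k)⁻¹ = (A n k m)⁻¹ * rword n k m := by
      have h1 := rword_mul_sigma (n := n) (i := k) (m := m) (show k < m by omega)
      have h2 : (A n k m)⁻¹ * (rword n k m * σ n k) = rword n (k+1) m := by rw [h1]; group
      rw [← h2]; group
    exact ⟨g, hg, p * (A n k m)⁻¹, mul_mem hp (inv_mem (A_mem_P hk1 hk2)),
      k, hk1, by omega, by rw [mul_assoc (g*p), key]; group⟩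
  · rcases Nat.eq_or_lt_of_le (show i ≤ k by omega) with hC | hD
    · -- i = k : r_i σ_i⁻¹ = r_{i+1}
      subst hC
      exact ⟨g, hg, p, hp, i+1, by omega, by omega,
        by rw [mul_assoc (g*p), rword_pop (show i < m by omega)]; group⟩
    · -- i + 1 ≤ k
      have hp2 : rword n i m * σ n k = σ n (k-1) * rword n i m :=
        rword_push hi1 (by omega) (by omega) hmn
      have key : rword n i m * (σ n k)⁻¹ = (σ n (k-1))⁻¹ * rword n i m := by
        rw [eq_comm, inv_mul_eq_iff_eq_mul, ← mul_assoc, ← hp2]; group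
      exact ⟨g * (σ n (k-1))⁻¹, mul_mem hg (inv_mem (sigma_mem_Gs (by omega) (by omega))),
        σ n (k-1) * p * (σ n (k-1))⁻¹,
        conj_mem_P hmn (le_refl _) (sigma_mem_Gs (by omega) (by omega)) hp,
        i, hi1, hi2, by rw [mul_assoc (g*p), key]; group⟩

/-- Every element of `G_m` admits a coset decomposition. -/
theorem mem_Cos_of_mem_Gs {m : ℕ} (hm : 1 ≤ m) (hmn : m ≤ n) {β : BraidGroup n}
    (hβ : β ∈ Gs n m) : β ∈ Cos n m := by
  let U : Subgroup (BraidGroup n) :=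
    { carrier := {x | ∀ u ∈ Cos n m, u * x ∈ Cos n m ∧ u * x⁻¹ ∈ Cos n m}
      one_mem' := by intro u hu; exact ⟨by simpa using hu, by simpa using hu⟩
      mul_mem' := by
        intro a b ha hb u hu
        constructor
        · rw [← mul_assoc]; exact (hb _ ((ha u hu).1)).1
        · rw [mul_inv_rev, ← mul_assoc]; exact (ha _ ((hb u hu).2)).2
      inv_mem' := by
        intro a ha u hu
        exact ⟨(ha u hu).2, by rw [inv_inv]; exact (ha u hu).1⟩ }
  have hGU : Gs n m ≤ U := by
    rw [Gs, Subgroup.closure_le]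
    rintro x ⟨k, ⟨h1, h2⟩, rfl⟩
    intro u hu
    exact ⟨Cos_mul_sigma hmn h1 h2 hu, Cos_mul_sigma_inv hmn h1 h2 hu⟩
  have := (hGU hβ) 1 (one_mem_Cos hm)
  simpa using this.1

/-- The block word `σ_{a+1} ⋯ σ_{b-1}`. -/
def blockWord (n a b : ℕ) : BraidGroup n := ((List.range' (a+1) (b-a-1)).map (σ n)).prod

/-- The product of block words given by block sizes `l`, starting at `a`. -/
def BP (n : ℕ) : ℕ → List ℕ → BraidGroup n
  | _, [] => 1
  | a, c :: l => blockWord n a (a+c) * BP n (a+c) l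

theorem blockWord_triv {a b : ℕ} (h : b ≤ a + 1) : blockWord n a b = 1 := by
  rw [blockWord, Nat.sub_eq_zero_of_le (by omega : b - a ≤ 1)]
  rfl

theorem blockWord_top {a b : ℕ} (h : a + 1 ≤ b) :
    blockWord n a (b+1) = blockWord n a b * σ n b := by
  rw [blockWord, blockWord, show b + 1 - a - 1 = (b - a - 1) + 1 by omega, List.range'_1_concat,
    List.map_append, List.prod_append, show a + 1 + (b - a - 1) = b by omega]
  simp

theorem blockWord_mem_Gs {a b : ℕ} : blockWord n a b ∈ Gs n b := by
  apply Subgroup.list_prod_mem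
  intro x hx
  simp only [List.mem_map, List.mem_range'_1] at hx
  obtain ⟨t, ht, rfl⟩ := hx
  exact sigma_mem_Gs (by omega) (by omega)

theorem commute_blockWord_high {k a b : ℕ} (h : b < k) : Commute (σ n k) (blockWord n a b) := by
  apply Commute.list_prod_right
  intro y hy
  simp only [List.mem_map, List.mem_range'_1] at hy
  obtain ⟨t, ht, rfl⟩ := hy
  exact comm_rel' (by omega)

theorem commute_blockWord_low {k a b : ℕ} (h : k + 1 ≤ a) : Commute (σ n k) (blockWord n a b) := by
  apply Commute.list_prod_right
  intro y hy
  simp only [List.mem_map, List.mem_range'_1] at hy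
  obtain ⟨t, ht, rfl⟩ := hy
  exact comm_rel (by omega)

theorem BP_mem_Gs (a : ℕ) (l : List ℕ) : BP n a l ∈ Gs n (a + l.sum) := by
  induction l generalizing a with
  | nil => exact one_mem _
  | cons c l ih =>
      rw [BP]
      refine mul_mem (Gs_mono ?_ blockWord_mem_Gs) (Gs_mono ?_ (ih (a+c))) <;>
        simp [List.sum_cons] <;> omega

theorem commute_BP_high {k a : ℕ} {l : List ℕ} (h : a + l.sum < k) :
    Commute (σ n k) (BP n a l) := by
  induction l generalizing a with
  | nil => exact Commute.one_right _
  | cons c l ih =>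
      rw [BP]
      exact (commute_blockWord_high (by simp at h; omega)).mul_right (ih (by simp at h ⊢; omega))

theorem BP_append (a : ℕ) (l : List ℕ) (c : ℕ) :
    BP n a (l ++ [c]) = BP n a l * blockWord n (a + l.sum) (a + l.sum + c) := by
  induction l generalizing a with
  | nil => simp [BP]
  | cons d l ih =>
      rw [List.cons_append, BP, BP, ih (a+d), ← mul_assoc]
      congr 2 <;> simp <;> ring_nf

/-- fix points of the block word below the block. -/
theorem perm_blockWord_fix_low {a b z : ℕ} (h : z ≤ a) :
    braidPerm n (blockWord n a b) z = z := by
  rcases Nat.lt_or_ge b (a+2) with hb | hb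
  · rw [blockWord_triv (by omega)]; simp
  · induction b with
    | zero => rw [blockWord_triv (by omega)]; simp
    | succ b ih =>
      rcases Nat.lt_or_ge b (a+1) with h1 | h1
      · rw [blockWord_triv (by omega)]; simp
      · rcases Nat.eq_or_lt_of_le h1 with h2 | h2
        · rw [blockWord_top h1, map_mul, Equiv.Perm.mul_apply, braidPerm_σ, permOfGen]
          have : blockWord n a b = 1 := blockWord_triv (by omega)
          rw [this]
          split
          · simp [Equiv.swap_apply_of_ne_of_ne (by omega : z ≠ b) (by omega : z ≠ b+1)]
          · simp
        · rw [blockWord_top h1, map_mul, Equiv.Perm.mul_apply, braidPerm_σ, permOfGen]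
          split
          · rw [Equiv.swap_apply_of_ne_of_ne (by omega : z ≠ b) (by omega : z ≠ b+1)]
            exact ih (by omega)
          · simp only [Equiv.Perm.one_apply]
            exact ih (by omega)

/-- the block word sends `z ↦ z+1` inside the block. -/
theorem perm_blockWord_apply_mid {a b z : ℕ} (h1 : a + 1 ≤ z) (h2 : z + 1 ≤ b) (hbn : b ≤ n) :
    braidPerm n (blockWord n a b) z = z + 1 := by
  induction b with
  | zero => omega
  | succ b ih =>
    rcases Nat.lt_or_ge z b with hz | hz
    · rw [blockWord_top (by omega), map_mul, Equiv.Perm.mul_apply, braidPerm_σ, permOfGen,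
        if_pos ⟨by omega, by omega⟩,
        Equiv.swap_apply_of_ne_of_ne (by omega : z ≠ b) (by omega : z ≠ b+1)]
      exact ih (by omega) (by omega)
    · have hz' : z = b := by omega
      subst hz'
      rw [blockWord_top (by omega), map_mul, Equiv.Perm.mul_apply, braidPerm_σ, permOfGen,
        if_pos ⟨by omega, by omega⟩, Equiv.swap_apply_left]
      exact perm_Gs_fixes (blockWord_mem_Gs) (z+1) (by omega)

/-- the block word sends the top `b` to the bottom `a+1`. -/
theorem perm_blockWord_apply_top {a b : ℕ} (h1 : a + 1 ≤ b) (hbn : b ≤ n) :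
    braidPerm n (blockWord n a b) b = a + 1 := by
  induction b with
  | zero => omega
  | succ b ih =>
    rcases Nat.lt_or_ge b (a+1) with hb | hb
    · have : b = a := by omega
      subst this
      rw [blockWord_triv (le_refl _)]; simp
    · rw [blockWord_top hb, map_mul, Equiv.Perm.mul_apply, braidPerm_σ, permOfGen,
        if_pos ⟨by omega, by omega⟩, Equiv.swap_apply_right]
      exact ih hb (by omega)

theorem perm_inv_fix {f : Equiv.Perm ℕ} {z : ℕ} (h : f z = z) : f⁻¹ z = z := by
  conv_lhs => rw [← h]
  exact Equiv.symm_apply_apply f z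

/-- Main normal-form claim: every `β ∈ G_m` is conjugate within `G_m` to a
standard block permutation word times a pure braid, with a conjugator whose
permutation fixes `m`. -/
theorem claim5 : ∀ m, m ≤ n → ∀ β ∈ Gs n m, ∃ γ ∈ Gs n m, ∃ ns : List ℕ,
    (∀ c ∈ ns, 0 < c) ∧ ns.sum = m ∧ ∃ u ∈ (braidPerm n).ker ⊓ Gs n m,
    γ⁻¹ * β * γ = BP n 0 ns * u ∧ braidPerm n γ m = m := by
  intro m
  induction m using Nat.strong_induction_on with
  | _ m ih =>
  intro hmn β hβ
  rcases Nat.lt_or_ge m 2 with hm2 | hm2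
  · -- m = 0 or 1 : G_m is trivial
    have hβ1 : β = 1 := by
      have : Gs n m = ⊥ := by
        rw [Gs, show Set.Ico 1 m = (∅ : Set ℕ) from Set.Ico_eq_empty (by omega),
          Set.image_empty, Subgroup.closure_empty]
      rw [this, Subgroup.mem_bot] at hβ
      exact hβ
    subst hβ1
    rcases Nat.lt_or_ge m 1 with hm1 | hm1
    · refine ⟨1, one_mem _, [], by simp, by simp only [List.sum_nil]; omega, 1,
        ⟨by simp, one_mem _⟩, by simp [BP], by simp⟩
    · have hm : m = 1 := by omega
      subst hm
      refine ⟨1, one_mem _, [1], by simp, by simp, 1, ⟨by simp, one_mem _⟩, ?_, by simp⟩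
      rw [BP, BP, blockWord_triv (by omega)]
      simp
  -- m ≥ 2
  obtain ⟨g, hg, p, hp, i, hi1, hi2, rfl⟩ := mem_Cos_of_mem_Gs (by omega) hmn hβ
  rcases Nat.eq_or_lt_of_le hi2 with him | him
  · -- i = m : β = g * p
    subst him
    rw [rword_self, mul_one]
    obtain ⟨γ₁, hγ₁, ns₁, hpos, hsum, u₁, hu₁, heq, hfix⟩ :=
      ih (i-1) (by omega) (by omega) g hg
    have hp₁ : γ₁⁻¹ * p * γ₁ ∈ P n i := conj_mem_P' hmn (le_refl _) hγ₁ hp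
    refine ⟨γ₁, Gs_mono (by omega) hγ₁, ns₁ ++ [1], ?_,
      by rw [List.sum_append, hsum, show ([1] : List ℕ).sum = 1 from rfl]; omega,
      u₁ * (γ₁⁻¹ * p * γ₁), ⟨?_, ?_⟩, ?_, ?_⟩
    · intro c hc
      rcases List.mem_append.mp hc with h | h
      · exact hpos c h
      · simp at h; omega
    · exact mul_mem (Subgroup.mem_inf.mp hu₁).1 (P_le_ker i hp₁)
    · exact mul_mem (Gs_mono (by omega) (Subgroup.mem_inf.mp hu₁).2) (P_le_Gs i hp₁)
    · rw [BP_append, blockWord_triv (by omega), mul_one]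
      calc γ₁⁻¹ * (g * p) * γ₁ = (γ₁⁻¹ * g * γ₁) * (γ₁⁻¹ * p * γ₁) := by group
        _ = BP n 0 ns₁ * u₁ * (γ₁⁻¹ * p * γ₁) := by rw [heq]
        _ = BP n 0 ns₁ * (u₁ * (γ₁⁻¹ * p * γ₁)) := by group
    · exact perm_Gs_fixes hγ₁ i (by omega)
  · -- i < m
    -- conjugate by g * p to get σ_{m-1} * g' * p
    have hrw : rword n i m = σ n (m-1) * rword n i (m-1) := by
      have := rword_top (n := n) (i := i) (m := m-1) (by omega)
      rwa [show m - 1 + 1 = m by omega] at this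
    set g' : BraidGroup n := rword n i (m-1) * g with hg'def
    have hg' : g' ∈ Gs n (m-1) := mul_mem (rword_mem_Gs hi1) hg
    obtain ⟨γ₁, hγ₁, ns₁, hpos, hsum, u₁, hu₁, heq, hfix⟩ :=
      ih (m-1) (by omega) (by omega) g' hg'
    obtain ⟨ns₀, L, hns₁⟩ : ∃ ns₀ L, ns₁ = ns₀ ++ [L] := by
      rcases List.eq_nil_or_concat ns₁ with h | ⟨ns₀, L, h⟩
      · exfalso; rw [h] at hsum; simp at hsum; omega
      · exact ⟨ns₀, L, by simpa [List.concat_eq_append] using h⟩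
    have hL : 1 ≤ L := hpos L (by rw [hns₁]; simp)
    set a : ℕ := ns₀.sum with hadef
    have ha : a + L = m - 1 := by
      rw [hns₁] at hsum; simpa using hsum
    have haux : a ≤ m - 2 := by omega
    -- p₁
    have hp₁ : γ₁⁻¹ * p * γ₁ ∈ P n m := conj_mem_P' hmn (le_refl _) (Gs_mono (le_refl _) hγ₁) hp
    set p₁ : BraidGroup n := γ₁⁻¹ * p * γ₁ with hp₁def
    -- w := σ⁻¹ γ₁⁻¹ σ γ₁ is pure
    set s : BraidGroup n := σ n (m-1) with hsdef
    set w : BraidGroup n := s⁻¹ * (γ₁⁻¹ * s * γ₁) with hwdef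
    have hsperm : braidPerm n s = Equiv.swap (m-1) m := by
      rw [hsdef, braidPerm_σ, permOfGen, if_pos ⟨by omega, by omega⟩,
        show m - 1 + 1 = m by omega]
    have hγ₁m : braidPerm n γ₁ m = m := perm_Gs_fixes hγ₁ m (by omega)
    have hwker : w ∈ (braidPerm n).ker := by
      have e : (braidPerm n γ₁)⁻¹ * Equiv.swap (m-1) m * braidPerm n γ₁
          = Equiv.swap (m-1) m := by
        have h2 := Equiv.swap_apply_apply (braidPerm n γ₁)⁻¹ (m-1) m
        rw [perm_inv_fix hfix, perm_inv_fix hγ₁m, inv_inv] at h2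
        exact h2.symm
      rw [MonoidHom.mem_ker, hwdef, map_mul, map_mul, map_mul, map_inv, map_inv, hsperm, e]
      simp
    have hsmem : s ∈ Gs n m := sigma_mem_Gs (by omega) (by omega)
    have hwGs : w ∈ Gs n m := by
      rw [hwdef]
      exact mul_mem (inv_mem hsmem) (mul_mem (mul_mem (inv_mem (Gs_mono (by omega) hγ₁)) hsmem)
        (Gs_mono (by omega) hγ₁))
    -- split BP ns₁
    have hBP1 : BP n 0 ns₁ = BP n 0 ns₀ * blockWord n a (m-1) := by
      rw [hns₁, BP_append]
      congr 2 <;> omega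
    set E : BraidGroup n := BP n 0 ns₀ with hEdef
    set X : BraidGroup n := blockWord n a (m-1) with hXdef
    have hcommE : s * E = E * s := (commute_BP_high (by omega)).eq
    -- u₂
    set u₂ : BraidGroup n := (BP n 0 ns₁)⁻¹ * w * BP n 0 ns₁ * u₁ * p₁ with hu₂def
    have hBPGs : BP n 0 ns₁ ∈ Gs n m := Gs_mono (by omega) (BP_mem_Gs 0 ns₁)
    have hkerN : ((braidPerm n).ker).Normal := MonoidHom.normal_ker _
    have hu₂ker : u₂ ∈ (braidPerm n).ker := by
      have h1 : (BP n 0 ns₁)⁻¹ * w * ((BP n 0 ns₁)⁻¹)⁻¹ ∈ (braidPerm n).ker :=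
        hkerN.conj_mem w hwker (BP n 0 ns₁)⁻¹
      rw [inv_inv] at h1
      exact mul_mem (mul_mem h1 (Subgroup.mem_inf.mp hu₁).1) (P_le_ker m hp₁)
    have hu₂Gs : u₂ ∈ Gs n m :=
      mul_mem (mul_mem (mul_mem (mul_mem (inv_mem hBPGs) hwGs) hBPGs)
        (Gs_mono (by omega) (Subgroup.mem_inf.mp hu₁).2)) (P_le_Gs m hp₁)
    have hT : γ₁⁻¹ * (s * g' * p) * γ₁ = E * (s * X) * u₂ := by
      have e1 : γ₁⁻¹ * s * γ₁ = s * w := by rw [hwdef]; group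
      have hEs : s * (E * X) = E * (s * X) := by rw [← mul_assoc, hcommE, mul_assoc]
      calc γ₁⁻¹ * (s * g' * p) * γ₁
          = (γ₁⁻¹ * s * γ₁) * (γ₁⁻¹ * g' * γ₁) * (γ₁⁻¹ * p * γ₁) := by group
        _ = (s * w) * (BP n 0 ns₁ * u₁) * p₁ := by rw [e1, heq, ← hp₁def]
        _ = s * BP n 0 ns₁ * ((BP n 0 ns₁)⁻¹ * w * BP n 0 ns₁ * u₁ * p₁) := by group
        _ = s * BP n 0 ns₁ * u₂ := by rw [← hu₂def]
        _ = E * (s * X) * u₂ := by rw [hBP1, hEs]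
    set ns : List ℕ := ns₀ ++ [L+1] with hnsdef
    set u₃ : BraidGroup n := s⁻¹ * u₂ * s with hu₃def
    have hu₃ker : u₃ ∈ (braidPerm n).ker := by
      have h1 : s⁻¹ * u₂ * (s⁻¹)⁻¹ ∈ (braidPerm n).ker := hkerN.conj_mem u₂ hu₂ker s⁻¹
      rwa [inv_inv] at h1
    have hu₃Gs : u₃ ∈ Gs n m := mul_mem (mul_mem (inv_mem hsmem) hu₂Gs) hsmem
    have hXs : X * s = blockWord n a m := by
      have h1 := blockWord_top (n := n) (a := a) (b := m-1) (by omega)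
      rw [show m - 1 + 1 = m by omega] at h1
      rw [hXdef, hsdef, ← h1]
    have hBPns : BP n 0 ns = E * blockWord n a m := by
      rw [hnsdef, BP_append, show (0:ℕ) + ns₀.sum = a from by omega,
        show a + (L+1) = m from by omega, hEdef]
    have hEs' : s⁻¹ * E * s = E := by rw [mul_assoc, ← hcommE]; group
    have hT2 : (s⁻¹ * γ₁⁻¹) * (s * g' * p) * (γ₁ * s) = BP n 0 ns * u₃ := by
      calc (s⁻¹ * γ₁⁻¹) * (s * g' * p) * (γ₁ * s)
          = s⁻¹ * (γ₁⁻¹ * (s * g' * p) * γ₁) * s := by group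
        _ = s⁻¹ * (E * (s * X) * u₂) * s := by rw [hT]
        _ = (s⁻¹ * E * s) * (X * s) * (s⁻¹ * u₂ * s) := by group
        _ = E * blockWord n a m * u₃ := by rw [hEs', hXs, ← hu₃def]
        _ = BP n 0 ns * u₃ := by rw [hBPns]
    set γt : BraidGroup n := g * p * γ₁ * s with hγtdef
    have hconj : γt⁻¹ * (g * p * rword n i m) * γt = BP n 0 ns * u₃ := by
      rw [← hT2, hγtdef, hrw, hg'def]
      group
    set δ : BraidGroup n := BP n 0 ns * u₃ with hδdef
    have hnssum : ns.sum = m := by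
      rw [hnsdef, List.sum_append, show List.sum [L+1] = L + 1 from by simp]
      omega
    have hδGs : δ ∈ Gs n m := by
      rw [hδdef]
      refine mul_mem ?_ hu₃Gs
      have := BP_mem_Gs (n := n) 0 ns
      rwa [zero_add, hnssum] at this
    have hγtGs : γt ∈ Gs n m :=
      mul_mem (mul_mem (mul_mem (Gs_mono (by omega) hg) (P_le_Gs m hp))
        (Gs_mono (by omega) hγ₁)) hsmem
    refine ⟨γt * δ^L, mul_mem hγtGs (pow_mem hδGs L), ns, ?_, hnssum, u₃, ⟨hu₃ker, hu₃Gs⟩, ?_, ?_⟩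
    · intro c hc
      rw [hnsdef] at hc
      rcases List.mem_append.mp hc with h | h
      · exact hpos c (by rw [hns₁]; exact List.mem_append.mpr (Or.inl h))
      · simp at h; omega
    · have hcm : Commute δ (δ^L) := (Commute.refl δ).pow_right L
      calc (γt * δ^L)⁻¹ * (g * p * rword n i m) * (γt * δ^L)
          = (δ^L)⁻¹ * (γt⁻¹ * (g * p * rword n i m) * γt) * δ^L := by group
        _ = (δ^L)⁻¹ * δ * δ^L := by rw [hconj]
        _ = (δ^L)⁻¹ * (δ^L * δ) := by rw [mul_assoc, hcm.eq]
        _ = BP n 0 ns * u₃ := by rw [← hδdef]; group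
    · -- permutation of the conjugator fixes m
      have hEmem : E ∈ Gs n a := by
        have := BP_mem_Gs (n := n) 0 ns₀
        rwa [zero_add, ← hadef, ← hEdef] at this
      have hρ : ∀ z, a + 1 ≤ z → z + 1 ≤ m → braidPerm n (BP n 0 ns) z = z + 1 := by
        intro z h1 h2
        rw [hBPns, map_mul, Equiv.Perm.mul_apply,
          perm_blockWord_apply_mid h1 h2 hmn]
        exact perm_Gs_fixes hEmem (z+1) (by omega)
      have hρtop : braidPerm n (BP n 0 ns) m = a + 1 := by
        rw [hBPns, map_mul, Equiv.Perm.mul_apply,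
          perm_blockWord_apply_top (by omega) hmn]
        exact perm_Gs_fixes hEmem (a+1) (by omega)
      have hδperm : braidPerm n δ = braidPerm n (BP n 0 ns) := by
        rw [hδdef, map_mul, MonoidHom.mem_ker.mp hu₃ker, mul_one]
      have hiter : ∀ k, 1 ≤ k → k ≤ L → ((braidPerm n (BP n 0 ns)) ^ k) m = a + k := by
        intro k hk1 hk2
        induction k with
        | zero => omega
        | succ k ihk =>
          rcases Nat.eq_zero_or_pos k with hk0 | hk0
          · subst hk0
            rw [pow_one, hρtop]
          · rw [pow_succ', Equiv.Perm.mul_apply, ihk hk0 (by omega),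
              hρ (a+k) (by omega) (by omega)]
            omega
      have hδL : braidPerm n (δ^L) m = m - 1 := by
        rw [map_pow, hδperm, hiter L hL (le_refl L)]
        omega
      have hγtperm : braidPerm n γt (m-1) = m := by
        rw [hγtdef, map_mul, map_mul, map_mul, Equiv.Perm.mul_apply, Equiv.Perm.mul_apply,
          Equiv.Perm.mul_apply, hsperm, Equiv.swap_apply_left, hγ₁m,
          MonoidHom.mem_ker.mp (P_le_ker m hp)]
        simp only [Equiv.Perm.one_apply]
        exact perm_Gs_fixes hg m (by omega)
      rw [map_mul, Equiv.Perm.mul_apply, hδL, hγtperm]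

theorem mem_Gs_top (x : BraidGroup n) : x ∈ Gs n n := by
  induction x using QuotientGroup.induction_on with
  | _ z =>
  induction z using FreeGroup.induction_on with
  | C1 => exact one_mem _
  | of i =>
      show σ n i ∈ Gs n n
      rcases Nat.eq_zero_or_pos i with h | h
      · subst h; rw [sigma_zero]; exact one_mem _
      rcases Nat.lt_or_ge i n with h2 | h2
      · exact sigma_mem_Gs h h2
      · rw [sigma_ge i h2]; exact one_mem _
  | inv_of i hi =>
      show (σ n i)⁻¹ ∈ Gs n n
      exact inv_mem hi
  | mul x y hx hy =>
      show (QuotientGroup.mk (x * y) : BraidGroup n) ∈ Gs n n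
      rw [QuotientGroup.mk_mul]
      exact mul_mem hx hy

/-- Combing: a pure braid in `G_m` is a product of elements of `P^2, …, P^m`. -/
theorem combing : ∀ m, m ≤ n → ∀ u ∈ Gs n m, u ∈ (braidPerm n).ker →
    ∃ f : ℕ → BraidGroup n, (∀ l, f l ∈ P n l) ∧
      u = ((List.range' 2 (m-1)).map f).prod := by
  intro m
  induction m using Nat.strong_induction_on with
  | _ m ih =>
  intro hmn u hu hker
  rcases Nat.lt_or_ge m 2 with hm2 | hm2
  · have hu1 : u = 1 := by
      have : Gs n m = ⊥ := by
        rw [Gs, show Set.Ico 1 m = (∅ : Set ℕ) from Set.Ico_eq_empty (by omega),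
          Set.image_empty, Subgroup.closure_empty]
      rw [this, Subgroup.mem_bot] at hu
      exact hu
    exact ⟨fun _ => 1, fun l => one_mem _, by
      rw [hu1, show m - 1 = 0 by omega]; simp⟩
  obtain ⟨g, hg, p, hp, i, hi1, hi2, rfl⟩ := mem_Cos_of_mem_Gs (by omega) hmn hu
  have him : i = m := by
    by_contra hne
    have hlt : i < m := by omega
    have h1 : braidPerm n (g * p * rword n i m) i = m := by
      rw [map_mul, map_mul, Equiv.Perm.mul_apply, Equiv.Perm.mul_apply,
        perm_rword_apply hi1 hi2 hmn, MonoidHom.mem_ker.mp (P_le_ker m hp)]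
      simp only [Equiv.Perm.one_apply]
      exact perm_Gs_fixes hg m (by omega)
    rw [MonoidHom.mem_ker.mp hker] at h1
    simp at h1
    omega
  subst him
  rw [rword_self, mul_one] at hker hu ⊢
  have hgker : g ∈ (braidPerm n).ker := by
    have : g = (g * p) * p⁻¹ := by group
    rw [this]
    exact mul_mem hker (inv_mem (P_le_ker i hp))
  obtain ⟨f', hf', heq⟩ := ih (i-1) (by omega) (by omega) g hg hgker
  refine ⟨fun l => if l = i then p else f' l, ?_, ?_⟩
  · intro l
    by_cases h : l = i
    · simp only [if_pos h]; subst h; exact hp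
    · simp only [if_neg h]; exact hf' l
  · have hsplit : List.range' 2 (i-1) = List.range' 2 (i-2) ++ [i] := by
      rw [show i - 1 = (i-2) + 1 by omega, List.range'_1_concat, show 2 + (i-2) = i by omega]
    rw [hsplit, List.map_append, List.prod_append, heq]
    have hmapeq : List.map (fun l => if l = i then p else f' l) (List.range' 2 (i-2))
        = List.map f' (List.range' 2 (i-2)) := by
      apply List.map_congr_left
      intro l hl
      rw [List.mem_range'_1] at hl
      rw [if_neg (by omega)]
    rw [hmapeq, show i - 1 - 1 = i - 2 by omega]
    simp

/-- The subgroup generated by `σ_t`, `t ≥ j+1`. -/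
def GsHigh (n j : ℕ) : Subgroup (BraidGroup n) := Subgroup.closure (σ n '' Set.Ici (j+1))

theorem commute_Gs_GsHigh {j : ℕ} {x y : BraidGroup n} (hx : x ∈ Gs n j) (hy : y ∈ GsHigh n j) :
    Commute x y := by
  induction hx using Subgroup.closure_induction with
  | mem z hz =>
      obtain ⟨k, ⟨hk1, hk2⟩, rfl⟩ := hz
      induction hy using Subgroup.closure_induction with
      | mem w hw =>
          obtain ⟨t, ht, rfl⟩ := hw
          exact comm_rel (by simp at ht; omega)
      | one => exact Commute.one_right _
      | mul a b _ _ iha ihb => exact iha.mul_right ihb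
      | inv a _ iha => exact iha.inv_right
  | one => exact Commute.one_left _
  | mul a b _ _ iha ihb => exact iha.mul_left ihb
  | inv a _ iha => exact iha.inv_left

theorem blockWord_mem_GsHigh {j a b : ℕ} (h : j ≤ a) : blockWord n a b ∈ GsHigh n j := by
  apply Subgroup.list_prod_mem
  intro x hx
  simp only [List.mem_map, List.mem_range'_1] at hx
  obtain ⟨t, ht, rfl⟩ := hx
  exact Subgroup.subset_closure ⟨t, by simp; omega, rfl⟩

theorem BP_mem_GsHigh {j a : ℕ} (l : List ℕ) (h : j ≤ a) : BP n a l ∈ GsHigh n j := by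
  induction l generalizing a with
  | nil => exact one_mem _
  | cons c l ihl => exact mul_mem (blockWord_mem_GsHigh h) (ihl (by omega))

theorem blockWord_split {a j b : ℕ} (h1 : a < j) (h2 : j < b) :
    blockWord n a b = blockWord n a j * σ n j * blockWord n j b := by
  induction b with
  | zero => omega
  | succ b ihb =>
    rcases Nat.eq_or_lt_of_le (show j + 1 ≤ b + 1 from h2) with h | h
    · rw [← h, blockWord_top (by omega), blockWord_triv (le_refl _), mul_one]
    · rw [blockWord_top (by omega), ihb (by omega), blockWord_top (by omega)]
      group

theorem BP_factor : ∀ (ns : List ℕ) (a j : ℕ), a < j → j < a + ns.sum →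
    j ∉ (partialSums ns).map (a + ·) →
    ∃ low high, low ∈ Gs n j ∧ high ∈ GsHigh n j ∧ BP n a ns = low * σ n j * high := by
  intro ns
  induction ns with
  | nil => intro a j h1 h2 h3; simp at h2; omega
  | cons c l ihl =>
    intro a j h1 h2 h3
    have hjne : j ≠ a + c := by
      intro h
      apply h3
      rw [partialSums]
      simp [h]
    rcases Nat.lt_or_ge j (a+c) with hj | hj
    · refine ⟨blockWord n a j, blockWord n j (a+c) * BP n (a+c) l,
        blockWord_mem_Gs, mul_mem (blockWord_mem_GsHigh (le_refl _)) (BP_mem_GsHigh l (by omega)),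
        ?_⟩
      rw [BP, blockWord_split h1 hj]
      group
    · have hj' : a + c < j := by omega
      obtain ⟨low, high, hlow, hhigh, heq⟩ := ihl (a+c) j hj'
        (by rw [List.sum_cons] at h2; omega)
        (by
          intro hmem
          apply h3
          rw [partialSums]
          simp only [List.map_cons, List.mem_cons, List.map_map]
          right
          simp only [List.mem_map] at hmem ⊢
          obtain ⟨z, hz, hzeq⟩ := hmem
          exact ⟨z, hz, by simp [Function.comp]; omega⟩)
      refine ⟨blockWord n a (a+c) * low, high,
        mul_mem (Gs_mono (by omega) blockWord_mem_Gs) hlow, hhigh, ?_⟩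
      rw [BP, heq]
      group

theorem sigma_conj_Pj {j : ℕ} (hj : 1 ≤ j) : ∀ q ∈ P n j,
    σ n j * q * (σ n j)⁻¹ ∈ P n (j+1) := by
  intro q hq
  induction hq using Subgroup.closure_induction with
  | mem x hx =>
      obtain ⟨i, ⟨h1, h2⟩, rfl⟩ := hx
      rw [← A_succ h2]
      exact A_mem_P h1 (by omega)
  | one => simpa using one_mem (P n (j+1))
  | mul x y hx hy ihx ihy =>
      have : σ n j * (x * y) * (σ n j)⁻¹ = (σ n j * x * (σ n j)⁻¹) * (σ n j * y * (σ n j)⁻¹) := by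
        group
      rw [this]; exact mul_mem ihx ihy
  | inv x hx ihx =>
      have : σ n j * x⁻¹ * (σ n j)⁻¹ = (σ n j * x * (σ n j)⁻¹)⁻¹ := by group
      rw [this]; exact inv_mem ihx

/-- Conjugation by the standard permutation word pushes `P^j` into `P^{j+1}`
when `j` is not a partial sum. -/
theorem BP_conj_P {ns : List ℕ} {j : ℕ} (hj1 : 1 ≤ j) (hjn : j + 1 ≤ ns.sum)
    (hsn : ns.sum ≤ n) (hj : j ∉ partialSums ns) :
    ∀ q ∈ P n j, (BP n 0 ns) * q * (BP n 0 ns)⁻¹ ∈ P n (j+1) := by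
  intro q hq
  obtain ⟨low, high, hlow, hhigh, heq⟩ := BP_factor ns 0 j (by omega) (by omega)
    (by simpa using hj)
  have hqG : q ∈ Gs n j := P_le_Gs j hq
  have hcq : Commute q high := commute_Gs_GsHigh hqG hhigh
  have key : (BP n 0 ns) * q * (BP n 0 ns)⁻¹ = low * (σ n j * q * (σ n j)⁻¹) * low⁻¹ := by
    rw [heq]
    calc low * σ n j * high * q * (low * σ n j * high)⁻¹
        = low * σ n j * (high * q * high⁻¹) * (σ n j)⁻¹ * low⁻¹ := by group
      _ = low * σ n j * (q * high * high⁻¹) * (σ n j)⁻¹ * low⁻¹ := by rw [← hcq.eq]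
      _ = low * (σ n j * q * (σ n j)⁻¹) * low⁻¹ := by group
  rw [key]
  exact conj_mem_P (by omega) (by omega) hlow (sigma_conj_Pj hj1 q hq)

theorem ps_pos {ns : List ℕ} (hpos : ∀ c ∈ ns, 0 < c) : ∀ x ∈ partialSums ns, 1 ≤ x := by
  induction ns with
  | nil => intro x hx; simp [partialSums] at hx
  | cons a l ihl =>
    intro x hx
    rw [partialSums] at hx
    rcases List.mem_cons.mp hx with h | h
    · have := hpos a (by simp); omega
    · simp only [List.mem_map] at h
      obtain ⟨z, hz, rfl⟩ := h
      have := hpos a (by simp)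
      omega

theorem ps_le_sum {ns : List ℕ} : ∀ x ∈ partialSums ns, x ≤ ns.sum := by
  induction ns with
  | nil => intro x hx; simp [partialSums] at hx
  | cons a l ihl =>
    intro x hx
    rw [partialSums] at hx
    rw [List.sum_cons]
    rcases List.mem_cons.mp hx with h | h
    · omega
    · simp only [List.mem_map] at h
      obtain ⟨z, hz, rfl⟩ := h
      have := ihl z hz
      omega

theorem sum_mem_ps {ns : List ℕ} (h : ns ≠ []) : ns.sum ∈ partialSums ns := by
  induction ns with
  | nil => exact absurd rfl h
  | cons a l ihl =>
    rw [partialSums, List.sum_cons]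
    rcases List.eq_nil_or_concat l with h0 | ⟨l', c, h0⟩
    · subst h0; simp [partialSums]
    · refine List.mem_cons.mpr (Or.inr ?_)
      simp only [List.mem_map]
      exact ⟨l.sum, ihl (by subst h0; simp), rfl⟩

theorem ps_sorted {ns : List ℕ} (hpos : ∀ c ∈ ns, 0 < c) :
    (partialSums ns).Pairwise (· < ·) := by
  induction ns with
  | nil => rw [partialSums]; exact List.Pairwise.nil
  | cons a l ihl =>
    rw [partialSums]
    refine List.pairwise_cons.mpr ⟨?_, ?_⟩
    · intro b hb
      simp only [List.mem_map] at hb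
      obtain ⟨z, hz, rfl⟩ := hb
      have h1 := ps_pos (fun c hc => hpos c (by simp [hc])) z hz
      omega
    · have hs := ihl (fun c hc => hpos c (by simp [hc]))
      exact List.Pairwise.map _ (fun x y h => by omega) hs

theorem filter_succ_mem {L : List ℕ} (hL : L.Pairwise (· < ·)) {j : ℕ} (hmem : (j+1) ∈ L) :
    L.filter (fun l => decide (2 ≤ l ∧ l ≤ j + 1)) =
      L.filter (fun l => decide (2 ≤ l ∧ l ≤ j)) ++ (if 2 ≤ j + 1 then [j+1] else []) := by
  induction L with
  | nil => simp at hmem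
  | cons x L ihl =>
    have hx := (List.pairwise_cons.mp hL).1
    have hLs := (List.pairwise_cons.mp hL).2
    rcases List.mem_cons.mp hmem with hxe | hmem'
    · subst hxe
      have h1 : L.filter (fun l => decide (2 ≤ l ∧ l ≤ j + 1)) = [] := by
        apply List.filter_eq_nil_iff.mpr
        intro b hb
        have := hx b hb
        simp only [decide_eq_true_eq]
        omega
      have h2 : L.filter (fun l => decide (2 ≤ l ∧ l ≤ j)) = [] := by
        apply List.filter_eq_nil_iff.mpr
        intro b hb
        have := hx b hb
        simp only [decide_eq_true_eq]
        omega
      rw [List.filter_cons, List.filter_cons, h1, h2]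
      by_cases h2j : 2 ≤ j + 1
      · rw [if_pos (by simp only [decide_eq_true_eq]; omega),
          if_neg (by simp only [decide_eq_true_eq]; omega), if_pos h2j]
        simp
      · rw [if_neg (by simp only [decide_eq_true_eq]; omega),
          if_neg (by simp only [decide_eq_true_eq]; omega), if_neg h2j]
        simp
    · have hxlt : x < j + 1 := hx (j+1) hmem'
      rw [List.filter_cons, List.filter_cons]
      have e1 : (decide (2 ≤ x ∧ x ≤ j + 1)) = (decide (2 ≤ x ∧ x ≤ j)) := by
        simp only [decide_eq_decide]; omega
      rw [e1, ihl hLs hmem']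
      split <;> simp

theorem P_triv {l : ℕ} (hl : l ≤ 1) : P n l = ⊥ := by
  rw [P, show Set.Ico 1 l = (∅ : Set ℕ) from Set.Ico_eq_empty (by omega),
    Set.image_empty, Subgroup.closure_empty]

/-- moving an element of `P^k` leftwards through a product of elements of higher `P^l`. -/
theorem move_front (Lst : List ℕ) (f : ℕ → BraidGroup n) (c : BraidGroup n) (k : ℕ)
    (hc : c ∈ P n k) (h : ∀ l ∈ Lst, f l ∈ P n l ∧ k < l ∧ l ≤ n) :
    (Lst.map f).prod * c = c * (Lst.map (fun l => c⁻¹ * f l * c)).prod ∧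
      (∀ l ∈ Lst, c⁻¹ * f l * c ∈ P n l) := by
  induction Lst with
  | nil => simp
  | cons x L ihl =>
    obtain ⟨hfx, hkx, hxn⟩ := h x (by simp)
    have ihl' := ihl (fun l hl => h l (by simp [hl]))
    constructor
    · rw [List.map_cons, List.prod_cons, List.map_cons, List.prod_cons, mul_assoc, ihl'.1]
      group
    · intro l hl
      rcases List.mem_cons.mp hl with h' | h'
      · subst h'
        exact conj_mem_P' hxn (by omega) (P_le_Gs k hc) hfx
      · exact ihl'.2 l h'

theorem elim_rec {ns : List ℕ} (hpos : ∀ c ∈ ns, 0 < c) (hsum : ns.sum = n) :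
    ∀ (t j : ℕ), 1 ≤ j → j + t = n →
    ∀ (b f : ℕ → BraidGroup n), (∀ l, b l ∈ P n l) → (∀ l, f l ∈ P n l) →
    ∃ γ : BraidGroup n, ∃ b' : ℕ → BraidGroup n, (∀ l, b' l ∈ P n l) ∧
      γ⁻¹ * (BP n 0 ns *
        (((partialSums ns).filter (fun l => decide (2 ≤ l ∧ l ≤ j))).map b).prod *
        ((List.range' (j+1) t).map f).prod) * γ
      = BP n 0 ns * (((partialSums ns).filter (fun l => decide (2 ≤ l))).map b').prod := by
  intro t
  induction t with
  | zero =>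
    intro j hj1 hjt b f hb hf
    refine ⟨1, b, hb, ?_⟩
    have he : (partialSums ns).filter (fun l => decide (2 ≤ l ∧ l ≤ j)) =
        (partialSums ns).filter (fun l => decide (2 ≤ l)) := by
      apply List.filter_congr
      intro x hx
      have := ps_le_sum x hx
      simp only [decide_eq_decide]
      omega
    rw [he]
    simp
  | succ t iht =>
    intro j hj1 hjt b f hb hf
    have htl : List.range' (j+1) (t+1) = (j+1) :: List.range' (j+2) t := by
      have := List.range'_succ (s := j+1) (n := t) (step := 1)
      simpa using this
    by_cases hmem : (j+1) ∈ partialSums ns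
    · -- absorb f (j+1) into the kept part
      set b₁ : ℕ → BraidGroup n := fun l => if l = j+1 then f (j+1) else b l with hb₁
      have hb₁P : ∀ l, b₁ l ∈ P n l := by
        intro l; rw [hb₁]; by_cases h : l = j+1
        · simp only [if_pos h]; subst h; exact hf _
        · simp only [if_neg h]; exact hb l
      have hkept : (((partialSums ns).filter (fun l => decide (2 ≤ l ∧ l ≤ j+1))).map b₁).prod
          = (((partialSums ns).filter (fun l => decide (2 ≤ l ∧ l ≤ j))).map b).prod * f (j+1) := by
        rw [filter_succ_mem (ps_sorted hpos) hmem, if_pos (by omega)]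
        rw [List.map_append, List.prod_append]
        congr 1
        · apply congrArg
          apply List.map_congr_left
          intro x hx
          rw [List.mem_filter] at hx
          have hx2 := hx.2
          simp only [decide_eq_true_eq] at hx2
          rw [hb₁]; simp only [if_neg (by omega : ¬ x = j+1)]
        · rw [hb₁]; simp
      obtain ⟨γ, b', hb', hres⟩ := iht (j+1) (by omega) (by omega) b₁ f hb₁P hf
      refine ⟨γ, b', hb', ?_⟩
      rw [← hres, htl, List.map_cons, List.prod_cons, hkept]
      group
    · -- conjugate to push f (j+1) upward
      have hnsne : ns ≠ [] := by
        intro h; rw [h] at hsum; simp at hsum; omega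
      have hnps : n ∈ partialSums ns := by rw [← hsum]; exact sum_mem_ps hnsne
      have hjn : j + 1 < n := by
        rcases Nat.eq_or_lt_of_le (show j+1 ≤ n by omega) with h | h
        · exact absurd (h ▸ hnps) hmem
        · exact h
      have ht1 : 1 ≤ t := by omega
      set w : BraidGroup n := (((partialSums ns).filter (fun l => decide (2 ≤ l ∧ l ≤ j))).map b).prod with hw
      have hwG : w ∈ Gs n j := by
        rw [hw]; apply Subgroup.list_prod_mem; intro x hx
        simp only [List.mem_map] at hx
        obtain ⟨l, hl, rfl⟩ := hx
        rw [List.mem_filter] at hl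
        have hl2 := hl.2
        simp only [decide_eq_true_eq] at hl2
        exact Gs_mono hl2.2 (P_le_Gs l (hb l))
      set y : BraidGroup n := w * f (j+1) * w⁻¹ with hy
      have hyP : y ∈ P n (j+1) := conj_mem_P (by omega) (by omega) hwG (hf (j+1))
      set c : BraidGroup n := BP n 0 ns * y * (BP n 0 ns)⁻¹ with hc
      have hcP : c ∈ P n (j+2) :=
        BP_conj_P (by omega) (by omega) (by omega) hmem y hyP
      have htl2 : List.range' (j+2) t = (j+2) :: List.range' (j+3) (t-1) := by
        have h0 := List.range'_succ (s := j+2) (n := t-1) (step := 1)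
        rw [show t - 1 + 1 = t from by omega] at h0
        simpa using h0
      have hmv := move_front (List.range' (j+3) (t-1)) f c (j+2) hcP (by
        intro l hl; rw [List.mem_range'_1] at hl
        exact ⟨hf l, by omega, by omega⟩)
      set f' : ℕ → BraidGroup n :=
        fun l => if l = j+2 then f (j+2) * c else
          if j+3 ≤ l ∧ l ≤ n then c⁻¹ * f l * c else 1 with hf'
      have hf'P : ∀ l, f' l ∈ P n l := by
        intro l; rw [hf']
        by_cases h : l = j+2
        · simp only [if_pos h]; subst h; exact mul_mem (hf _) hcP
        · simp only [if_neg h]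
          by_cases h2 : j+3 ≤ l ∧ l ≤ n
          · simp only [if_pos h2]
            exact conj_mem_P' h2.2 (by omega) (P_le_Gs _ hcP) (hf l)
          · simp only [if_neg h2]; exact one_mem _
      have hmapf' : (List.range' (j+3) (t-1)).map f'
          = (List.range' (j+3) (t-1)).map (fun l => c⁻¹ * f l * c) := by
        apply List.map_congr_left
        intro x hx
        rw [List.mem_range'_1] at hx
        show f' x = _
        rw [hf']
        simp only []
        rw [if_neg (show ¬ x = j + 2 by omega), if_pos (show j+3 ≤ x ∧ x ≤ n by omega)]
      have hf'j2 : f' (j+2) = f (j+2) * c := by rw [hf']; simp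
      have hBPc : c⁻¹ * BP n 0 ns = BP n 0 ns * y⁻¹ := by rw [hc]; group
      have hkeptcongr : (partialSums ns).filter (fun l => decide (2 ≤ l ∧ l ≤ j+1))
          = (partialSums ns).filter (fun l => decide (2 ≤ l ∧ l ≤ j)) := by
        apply List.filter_congr
        intro x hx
        have : x ≠ j+1 := fun h => hmem (h ▸ hx)
        simp only [decide_eq_decide]
        omega
      have hRHS : ((List.range' (j+2) t).map f').prod = (f (j+2) * c) *
          ((List.range' (j+3) (t-1)).map (fun l => c⁻¹ * f l * c)).prod := by
        rw [htl2, List.map_cons, List.prod_cons, hmapf', hf'j2]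
      have hkey : c⁻¹ * (BP n 0 ns * w * ((List.range' (j+1) (t+1)).map f).prod) * c
          = BP n 0 ns * w * ((List.range' (j+2) t).map f').prod := by
        rw [htl, List.map_cons, List.prod_cons, hRHS, htl2, List.map_cons, List.prod_cons]
        calc c⁻¹ * (BP n 0 ns * w * (f (j+1) * (f (j+2) * ((List.range' (j+3) (t-1)).map f).prod))) * c
            = (c⁻¹ * BP n 0 ns) * (w * f (j+1) * w⁻¹) * w * f (j+2) *
              (((List.range' (j+3) (t-1)).map f).prod * c) := by group
          _ = (BP n 0 ns * y⁻¹) * y * w * f (j+2) *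
              (c * ((List.range' (j+3) (t-1)).map (fun l => c⁻¹ * f l * c)).prod) := by
                rw [hBPc, ← hy, hmv.1]
          _ = BP n 0 ns * w * (f (j+2) * c *
              ((List.range' (j+3) (t-1)).map (fun l => c⁻¹ * f l * c)).prod) := by group
      obtain ⟨γ, b', hb', hres⟩ := iht (j+1) (by omega) (by omega) b f' hb hf'P
      refine ⟨c * γ, b', hb', ?_⟩
      rw [hkeptcongr, ← hw] at hres
      calc (c*γ)⁻¹ * (BP n 0 ns * w * ((List.range' (j+1) (t+1)).map f).prod) * (c*γ)
          = γ⁻¹ * (c⁻¹ * (BP n 0 ns * w * ((List.range' (j+1) (t+1)).map f).prod) * c) * γ := by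
            group
        _ = γ⁻¹ * (BP n 0 ns * w * ((List.range' (j+2) t).map f').prod) * γ := by rw [hkey]
        _ = BP n 0 ns * (((partialSums ns).filter (fun l => decide (2 ≤ l))).map b').prod := hres

theorem BP_eq_filter : ∀ (ns : List ℕ) (a : ℕ), (∀ c ∈ ns, 0 < c) →
    (((List.range' a ns.sum).filter fun i =>
        decide (a + 1 ≤ i ∧ i ∉ (partialSums ns).map (a + ·))).map (σ n)).prod = BP n a ns := by
  intro ns
  induction ns with
  | nil => intro a _; simp [partialSums, BP]
  | cons c l ihl =>
    intro a hpos
    have hc : 0 < c := hpos c (by simp)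
    have hsplit : List.range' a (c :: l).sum = List.range' a c ++ List.range' (a + c) l.sum := by
      rw [List.sum_cons,
        ← List.range'_append (s := a) (m := c) (n := l.sum) (step := 1), one_mul]
    rw [hsplit, List.filter_append, List.map_append, List.prod_append]
    have hps : (partialSums (c :: l)).map (a + ·)
        = (a + c) :: (partialSums l).map ((a + c) + ·) := by
      rw [partialSums, List.map_cons, List.map_map]
      congr 1
      apply List.map_congr_left
      intro x _
      simp [Function.comp]
      omega
    have h1 : (List.range' a c).filter (fun i =>
        decide (a + 1 ≤ i ∧ i ∉ (partialSums (c :: l)).map (a + ·))) = List.range' (a+1) (c-1) := by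
      have e0 : List.range' a c = a :: List.range' (a+1) (c-1) := by
        have h0 := List.range'_succ (s := a) (n := c-1) (step := 1)
        rw [show c - 1 + 1 = c from by omega] at h0
        simpa using h0
      rw [e0, List.filter_cons]
      rw [if_neg (by simp)]
      apply List.filter_eq_self.mpr
      intro x hx
      rw [List.mem_range'_1] at hx
      simp only [decide_eq_true_eq]
      refine ⟨by omega, ?_⟩
      rw [hps]
      intro hmem
      rcases List.mem_cons.mp hmem with h | h
      · omega
      · simp only [List.mem_map] at h
        obtain ⟨z, hz, hzeq⟩ := h
        have := ps_pos (fun d hd => hpos d (by simp [hd])) z hz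
        omega
    have h2 : (List.range' (a+c) l.sum).filter (fun i =>
          decide (a + 1 ≤ i ∧ i ∉ (partialSums (c :: l)).map (a + ·)))
        = (List.range' (a+c) l.sum).filter (fun i =>
          decide ((a+c) + 1 ≤ i ∧ i ∉ (partialSums l).map ((a+c) + ·))) := by
      apply List.filter_congr
      intro x hx
      rw [List.mem_range'_1] at hx
      rw [hps]
      simp only [decide_eq_decide, List.mem_cons, not_or]
      constructor
      · intro ⟨hx1, hx2, hx3⟩
        exact ⟨by omega, hx3⟩
      · intro ⟨hx1, hx2⟩
        exact ⟨by omega, by omega, hx2⟩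
    rw [h1, h2, ihl (a+c) (fun d hd => hpos d (by simp [hd])), BP]
    congr 1
    rw [blockWord, show a + c - a - 1 = c - 1 from by omega]

theorem piBraid_eq_BP {ns : List ℕ} (hpos : ∀ c ∈ ns, 0 < c) (hsum : ns.sum = n) :
    piBraid n ns = BP n 0 ns := by
  rw [piBraid, ← BP_eq_filter ns 0 hpos, List.range_eq_range', hsum]
  congr 1
  apply congrArg
  apply List.filter_congr
  intro x _
  have hmap : List.map (fun z => 0 + z) (partialSums ns) = partialSums ns := by
    rw [show (fun z : ℕ => 0 + z) = id from by funext z; simp, List.map_id]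
  rw [hmap]

theorem prod_filter2 {L : List ℕ} {b : ℕ → BraidGroup n} (h : ∀ x ∈ L, x < 2 → b x = 1) :
    (L.map b).prod = ((L.filter (fun l => decide (2 ≤ l))).map b).prod := by
  induction L with
  | nil => simp
  | cons x L ihl =>
    rw [List.map_cons, List.prod_cons, List.filter_cons]
    by_cases h2 : 2 ≤ x
    · rw [if_pos (by simpa using h2), List.map_cons, List.prod_cons,
        ihl (fun z hz => h z (by simp [hz]))]
    · rw [if_neg (by simpa using h2), h x (by simp) (by omega), one_mul,
        ihl (fun z hz => h z (by simp [hz]))]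

end Braid2

/-- Every conjugacy class of the braid group `B_n` (`n ≥ 2`)
contains a woven braid: for every `β ∈ B_n` there are `γ ∈ B_n` and positive
integers `n₁, …, n_k` with `n₁ + ⋯ + n_k = n` such that `γ⁻¹ β γ` is woven of
type `(n₁, …, n_k)`. -/
theorem every_conjugacy_class_contains_a_woven_braid (n : ℕ) (hn : 2 ≤ n)
    (β : BraidGroup n) :
    ∃ (γ : BraidGroup n) (ns : List ℕ),
      (∀ m ∈ ns, 0 < m) ∧ ns.sum = n ∧ IsWovenOfType n ns (γ⁻¹ * β * γ) := by
  obtain ⟨γ₁, _, ns, hpos, hsum, u, hu, heq, _⟩ :=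
    Braid2.claim5 (n := n) n (le_refl n) β (Braid2.mem_Gs_top β)
  obtain ⟨f, hf, hufeq⟩ := Braid2.combing n (le_refl n) u (Subgroup.mem_inf.mp hu).2
    (Subgroup.mem_inf.mp hu).1
  have hkept0 : (partialSums ns).filter (fun l => decide (2 ≤ l ∧ l ≤ 1)) = [] := by
    apply List.filter_eq_nil_iff.mpr
    intro a _
    simp only [decide_eq_true_eq]
    omega
  obtain ⟨γ₂, b', hb', hres⟩ := Braid2.elim_rec hpos hsum (n-1) 1 (le_refl 1) (by omega)
      (fun _ => 1) f (fun _ => one_mem _) hf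
  rw [hkept0] at hres
  simp only [List.map_nil, List.prod_nil, mul_one] at hres
  refine ⟨γ₁ * γ₂, ns, hpos, hsum, ?_⟩
  refine ⟨fun l => if 2 ≤ l then b' l else 1, ?_, ?_⟩
  · intro m _
    by_cases h : 2 ≤ m
    · simp only [if_pos h]; exact hb' m
    · simp only [if_neg h]; exact one_mem _
  · have hprod : ((partialSums ns).map (fun l => if 2 ≤ l then b' l else 1)).prod
        = (((partialSums ns).filter (fun l => decide (2 ≤ l))).map b').prod := by
      rw [Braid2.prod_filter2 (fun x _ hx => by simp only [if_neg (by omega : ¬ 2 ≤ x)])]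
      apply congrArg
      apply List.map_congr_left
      intro x hx
      rw [List.mem_filter] at hx
      have := hx.2
      simp only [decide_eq_true_eq] at this
      simp only [if_pos this]
    calc (γ₁*γ₂)⁻¹ * β * (γ₁*γ₂) = γ₂⁻¹ * (γ₁⁻¹ * β * γ₁) * γ₂ := by group
      _ = γ₂⁻¹ * (Braid2.BP n 0 ns * ((List.range' 2 (n-1)).map f).prod) * γ₂ := by
          rw [heq, hufeq]
      _ = Braid2.BP n 0 ns *
          (((partialSums ns).filter (fun l => decide (2 ≤ l))).map b').prod := hres
      _ = piBraid n ns * ((partialSums ns).map (fun l => if 2 ≤ l then b' l else 1)).prod := by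
          rw [Braid2.piBraid_eq_BP hpos hsum, hprod]
end

section
/- For 2 ≤ i < j ≤ n, every element of P_n^i normalizes P_n^j from the appropriate side: for all μ ∈ P_n^i and ν ∈ P_n^j one has μ⁻¹ ν μ ∈ P_n^j (equivalently, there exists ν̃ ∈ P_n^j with ν μ = μ ν̃). -/
/-!
Each `σ_m` with `1 ≤ m ≤ j - 2` normalizes `P_n^j`, because conjugation by `σ_m` and by
`σ_m⁻¹` sends every generator `A_{kj}` of `P_n^j` into `P_n^j`: `σ_m` commutes with `A_{kj}` for
`m + 2 ≤ k`, fixes it for `k < m` (by the braid relation), and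
`σ_k A_{kj} σ_k⁻¹ = A_{k+1,j}`, `σ_k A_{k+1,j} σ_k⁻¹ = A_{k+1,j}⁻¹ A_{kj} A_{k+1,j}`.
Since `P_n^i` lies in the subgroup generated by `σ_1, …, σ_{i-1}` and `i ≤ j - 1`, it lies in
the normalizer of `P_n^j`.
-/

section GroupLemmas

variable {G : Type*} [Group G] {a b s x y : G}

theorem conj_mem_closure_of_forall {S : Set G} {g : G}
    (h : ∀ s ∈ S, g * s * g⁻¹ ∈ Subgroup.closure S) (hx : x ∈ Subgroup.closure S) :
    g * x * g⁻¹ ∈ Subgroup.closure S :=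
  (Subgroup.closure_le ((Subgroup.closure S).comap (MulAut.conj g).toMonoidHom)).2 h hx

theorem mem_normalizer_closure {S : Set G} {g : G}
    (h : ∀ s ∈ S, g * s * g⁻¹ ∈ Subgroup.closure S)
    (h' : ∀ s ∈ S, g⁻¹ * s * g ∈ Subgroup.closure S) :
    g ∈ Subgroup.normalizer (Subgroup.closure S : Set G) := by
  refine Subgroup.mem_normalizer_iff.2 fun x => ⟨conj_mem_closure_of_forall h, fun hx => ?_⟩
  simpa [mul_assoc] using conj_mem_closure_of_forall (g := g⁻¹) (by simpa using h') hx

theorem Commute.conj_conj (hab : Commute a b) (h : a * x * a⁻¹ = y) :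
    a * (b * x * b⁻¹) * a⁻¹ = b * y * b⁻¹ := by
  rw [← h, show a * (b * x * b⁻¹) * a⁻¹ = (a * b) * x * (a * b)⁻¹ by group, hab.eq]
  group

theorem inv_conj_eq_of_conj_eq (h : s * x * s⁻¹ = y) : s⁻¹ * y * s = x := by
  rw [← h]; group

theorem conj_conj_sq_of_braid (h : a * b * a = b * a * b) :
    a * (b * a ^ 2 * b⁻¹) * a⁻¹ = b ^ 2 := by
  simp only [pow_two]
  calc a * (b * (a * a) * b⁻¹) * a⁻¹ = (a * b * a) * (a * b⁻¹ * a⁻¹) := by group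
    _ = (b * a * b) * (a * b⁻¹ * a⁻¹) := by rw [h]
    _ = b * (a * b * a) * (b⁻¹ * a⁻¹) := by group
    _ = b * (b * a * b) * (b⁻¹ * a⁻¹) := by rw [h]
    _ = b * b := by group

theorem conj_sq_of_braid (h : a * b * a = b * a * b) :
    a * b ^ 2 * a⁻¹ = (b ^ 2)⁻¹ * (b * a ^ 2 * b⁻¹) * b ^ 2 := by
  have hc : a * b * a⁻¹ = b⁻¹ * a * b := by
    calc a * b * a⁻¹ = b⁻¹ * (b * a * b) * a⁻¹ := by group
      _ = b⁻¹ * a * b := by rw [← h]; group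
  simp only [pow_two]
  calc a * (b * b) * a⁻¹ = (a * b * a⁻¹) * (a * b * a⁻¹) := by group
    _ = (b * b)⁻¹ * (b * (a * a) * b⁻¹) * (b * b) := by rw [hc]; group

theorem conj_conj_conj_of_braid (h : a * b * a = b * a * b) (hx : Commute b x) :
    a * (b * (a * x * a⁻¹) * b⁻¹) * a⁻¹ = b * (a * x * a⁻¹) * b⁻¹ := by
  calc a * (b * (a * x * a⁻¹) * b⁻¹) * a⁻¹ = (a * b * a) * x * (a * b * a)⁻¹ := by group
    _ = b * a * (b * x * b⁻¹) * a⁻¹ * b⁻¹ := by rw [h]; group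
    _ = b * (a * x * a⁻¹) * b⁻¹ := by rw [hx.mul_inv_cancel]; group

theorem inv_conj_eq_of_conj_eq_of_conj_eq (h₁ : s * a * s⁻¹ = b)
    (h₂ : s * b * s⁻¹ = b⁻¹ * a * b) :
    s⁻¹ * a * s = a * b * a⁻¹ := by
  have ha : a = b * (s * b * s⁻¹) * b⁻¹ := by rw [h₂]; group
  calc s⁻¹ * a * s = (s⁻¹ * b * s) * b * (s⁻¹ * b * s)⁻¹ := by nth_rewrite 1 [ha]; group
    _ = a * b * a⁻¹ := by rw [inv_conj_eq_of_conj_eq h₁]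

end GroupLemmas

section Braid

variable {n : ℕ}

theorem σ_eq_one {i : ℕ} (h : i = 0 ∨ n ≤ i) : σ n i = 1 :=
  PresentedGroup.one_of_mem (Or.inr (Or.inr ⟨i, h, rfl⟩))

theorem σ_braid {i : ℕ} (h1 : 1 ≤ i) (h2 : i + 2 ≤ n) :
    σ n i * σ n (i + 1) * σ n i = σ n (i + 1) * σ n i * σ n (i + 1) := by
  have h := PresentedGroup.one_of_mem (rels := braidRels n) (Or.inl ⟨i, h1, h2, rfl⟩)
  simp only [map_mul, map_inv, mul_inv_eq_one] at h
  exact h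

theorem σ_commute {i j : ℕ} (h : i + 2 ≤ j) : Commute (σ n i) (σ n j) := by
  rcases Nat.eq_zero_or_pos i with rfl | hi
  · rw [σ_eq_one (Or.inl rfl)]
    exact Commute.one_left _
  rcases le_or_gt n j with hj | hj
  · rw [σ_eq_one (Or.inr hj)]
    exact Commute.one_right _
  have h := PresentedGroup.one_of_mem (rels := braidRels n)
    (Or.inr (Or.inl ⟨i, j, hi, h, hj, rfl⟩))
  simp only [map_mul, map_inv, mul_inv_eq_one] at h
  exact h

theorem A_succ_self (k : ℕ) : A n k (k + 1) = σ n k ^ 2 := by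
  simp [A]

theorem A_succ {k j : ℕ} (h : k < j) : A n k (j + 1) = σ n j * A n k j * (σ n j)⁻¹ := by
  simp [A, Nat.not_le.2 h]

theorem commute_σ_A {t k j : ℕ} (hkj : k < j) (ht : j + 1 ≤ t ∨ t + 2 ≤ k) :
    Commute (σ n t) (A n k j) := by
  induction j, hkj using Nat.le_induction with
  | base =>
    rw [A_succ_self]
    exact (ht.elim (fun h => (σ_commute (by omega)).symm) σ_commute).pow_right 2
  | succ j hkj ih =>
    rw [A_succ hkj]
    have h : Commute (σ n t) (σ n j) :=
      ht.elim (fun h => (σ_commute (by omega)).symm) (fun h => σ_commute (by omega))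
    exact (h.mul_right (ih (ht.imp_left (by omega)))).mul_right h.inv_right

theorem σ_conj_A_of_lt {m k j : ℕ} (hkm : k < m) (hmj : m + 2 ≤ j) (hjn : j ≤ n) :
    σ n m * A n k j * (σ n m)⁻¹ = A n k j := by
  induction j, hmj using Nat.le_induction with
  | base =>
    rw [A_succ (by omega), A_succ hkm]
    exact conj_conj_conj_of_braid (σ_braid (by omega) hjn) (commute_σ_A hkm (Or.inl le_rfl))
  | succ j hmj ih =>
    rw [A_succ (by omega)]
    exact (σ_commute (by omega)).conj_conj (ih (by omega))

theorem σ_conj_A_self {k j : ℕ} (hk : 1 ≤ k) (hkj : k + 2 ≤ j) (hjn : j ≤ n) :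
    σ n k * A n k j * (σ n k)⁻¹ = A n (k + 1) j := by
  induction j, hkj using Nat.le_induction with
  | base =>
    rw [A_succ (by omega), A_succ_self, A_succ_self]
    exact conj_conj_sq_of_braid (σ_braid hk hjn)
  | succ j hkj ih =>
    rw [A_succ (by omega), A_succ (by omega)]
    exact (σ_commute (by omega)).conj_conj (ih (by omega))

theorem σ_conj_A_succ {k j : ℕ} (hk : 1 ≤ k) (hkj : k + 2 ≤ j) (hjn : j ≤ n) :
    σ n k * A n (k + 1) j * (σ n k)⁻¹ = (A n (k + 1) j)⁻¹ * A n k j * A n (k + 1) j := by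
  induction j, hkj using Nat.le_induction with
  | base =>
    rw [A_succ_self (k + 1), A_succ (j := k + 1) (by omega), A_succ_self]
    exact conj_sq_of_braid (σ_braid hk hjn)
  | succ j hkj ih =>
    rw [A_succ (by omega), A_succ (by omega), (σ_commute (by omega)).conj_conj (ih (by omega))]
    group

end Braid

section PureBraid

variable {n : ℕ}

theorem A_mem_P {k j : ℕ} (hk : 1 ≤ k) (hkj : k < j) : A n k j ∈ P n j :=
  Subgroup.subset_closure ⟨k, ⟨hk, hkj⟩, rfl⟩

theorem σ_conj_A_mem_P {m k j : ℕ} (hm : 1 ≤ m) (hmj : m + 2 ≤ j) (hjn : j ≤ n)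
    (hk : 1 ≤ k) (hkj : k < j) : σ n m * A n k j * (σ n m)⁻¹ ∈ P n j := by
  rcases lt_trichotomy k m with hkm | rfl | hmk
  · rw [σ_conj_A_of_lt hkm hmj hjn]
    exact A_mem_P hk hkj
  · rw [σ_conj_A_self hm hmj hjn]
    exact A_mem_P (by omega) (by omega)
  · rcases (Nat.succ_le_of_lt hmk).eq_or_lt with rfl | hmk
    · rw [σ_conj_A_succ hm hmj hjn]
      exact mul_mem (mul_mem (inv_mem (A_mem_P hk hkj)) (A_mem_P hm (by omega))) (A_mem_P hk hkj)
    · rw [(commute_σ_A hkj (Or.inr hmk)).mul_inv_cancel]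
      exact A_mem_P hk hkj

theorem σ_inv_conj_A_mem_P {m k j : ℕ} (hm : 1 ≤ m) (hmj : m + 2 ≤ j) (hjn : j ≤ n)
    (hk : 1 ≤ k) (hkj : k < j) : (σ n m)⁻¹ * A n k j * σ n m ∈ P n j := by
  rcases lt_trichotomy k m with hkm | rfl | hmk
  · rw [inv_conj_eq_of_conj_eq (σ_conj_A_of_lt hkm hmj hjn)]
    exact A_mem_P hk hkj
  · rw [inv_conj_eq_of_conj_eq_of_conj_eq (σ_conj_A_self hm hmj hjn) (σ_conj_A_succ hm hmj hjn)]
    exact mul_mem (mul_mem (A_mem_P hk hkj) (A_mem_P (by omega) (by omega)))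
      (inv_mem (A_mem_P hk hkj))
  · rcases (Nat.succ_le_of_lt hmk).eq_or_lt with rfl | hmk
    · rw [inv_conj_eq_of_conj_eq (σ_conj_A_self hm hmj hjn)]
      exact A_mem_P hm (by omega)
    · rw [inv_conj_eq_of_conj_eq (commute_σ_A hkj (Or.inr hmk)).mul_inv_cancel]
      exact A_mem_P hk hkj

theorem σ_mem_normalizer_P {m j : ℕ} (hm : 1 ≤ m) (hmj : m + 2 ≤ j) (hjn : j ≤ n) :
    σ n m ∈ Subgroup.normalizer (P n j : Set (BraidGroup n)) := by
  apply mem_normalizer_closure <;> rintro _ ⟨k, ⟨hk, hkj⟩, rfl⟩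
  · exact σ_conj_A_mem_P hm hmj hjn hk hkj
  · exact σ_inv_conj_A_mem_P hm hmj hjn hk hkj

theorem closure_σ_le_normalizer_P {j : ℕ} (hjn : j ≤ n) :
    Subgroup.closure (σ n '' Set.Ico 1 (j - 1)) ≤
      Subgroup.normalizer (P n j : Set (BraidGroup n)) :=
  (Subgroup.closure_le _).2 <| by
    rintro _ ⟨m, ⟨hm, hmj⟩, rfl⟩
    exact σ_mem_normalizer_P hm (by omega) hjn

theorem A_mem_closure_σ {k j : ℕ} (hk : 1 ≤ k) (hkj : k < j) :
    A n k j ∈ Subgroup.closure (σ n '' Set.Ico 1 j) := by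
  have hσ {m l : ℕ} (hm : 1 ≤ m) (hml : m < l) :
      σ n m ∈ Subgroup.closure (σ n '' Set.Ico 1 l) :=
    Subgroup.subset_closure ⟨m, ⟨hm, hml⟩, rfl⟩
  induction j, hkj using Nat.le_induction with
  | base =>
    rw [A_succ_self]
    exact pow_mem (hσ hk (by omega)) 2
  | succ j hkj ih =>
    rw [A_succ hkj]
    have hle :
        Subgroup.closure (σ n '' Set.Ico 1 j) ≤ Subgroup.closure (σ n '' Set.Ico 1 (j + 1)) :=
      Subgroup.closure_mono (Set.image_mono (Set.Ico_subset_Ico_right (by omega)))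
    exact mul_mem (mul_mem (hσ (by omega) (by omega)) (hle ih))
      (inv_mem (hσ (by omega) (by omega)))

theorem P_le_closure_σ (j : ℕ) : P n j ≤ Subgroup.closure (σ n '' Set.Ico 1 j) :=
  (Subgroup.closure_le _).2 <| by
    rintro _ ⟨k, ⟨hk, hkj⟩, rfl⟩
    exact A_mem_closure_σ hk hkj

end PureBraid

theorem pure_i_normalizes_pure_j_general (n : ℕ) (i j : ℕ)
    (hij : i < j) (hj : j ≤ n)
    (μ ν : BraidGroup n) (hμ : μ ∈ P n i) (hν : ν ∈ P n j) :
    μ⁻¹ * ν * μ ∈ P n j := by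
  have hμ' : μ ∈ Subgroup.closure (σ n '' Set.Ico 1 (j - 1)) :=
    Subgroup.closure_mono (Set.image_mono (Set.Ico_subset_Ico_right (by omega)))
      (P_le_closure_σ i hμ)
  exact (Subgroup.mem_normalizer_iff''.mp (closure_σ_le_normalizer_P hj hμ') ν).mp hν

/-- For `2 ≤ i < j ≤ n`, every element of `P_n^i` normalizes
`P_n^j` from the appropriate side: `μ⁻¹ ν μ ∈ P_n^j` for all `μ ∈ P_n^i` and
`ν ∈ P_n^j`. -/
theorem pure_i_normalizes_pure_j (n : ℕ) (hn : 2 ≤ n) (i j : ℕ)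
    (h2 : 2 ≤ i) (hij : i < j) (hj : j ≤ n)
    (μ ν : BraidGroup n) (hμ : μ ∈ P n i) (hν : ν ∈ P n j) :
    μ⁻¹ * ν * μ ∈ P n j :=
  pure_i_normalizes_pure_j_general n i j hij hj μ ν hμ hν
end
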